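/- arXiv:1312.5119 — 3 statements merged into one kernel-verified Lean document; each statement's English description precedes it below -/
import Mathlib

section
/- Fix a positive integer k, a partition π of {1,…,2k} all of whose blocks have even cardinality, and a perfect matching π_1 of {1,…,2k}. Let B be a block of π ∨ π_1, let A^{(1)},…,A^{(m)} be the blocks of π contained in B, set 𝔞(β) = #A^{(β)}/2 and 𝔟 = #B/2. Suppose that exactly one β ∈ {1,…,m} satisfies 𝔞(β) ≥ 3 and no β satisfies 𝔞(β) = 2. Then there is a constant C, depending only on k, π and π_1, such that for all n, Σ_{j|_B} Π_{β=1}^{m} |C({Z_{j_α}}_{α ∈ A^{(β)}})| ≤ C · n^{Σ_{β=1}^{m} (𝔞(β)−2)·1[𝔞(β) ≥ 2]}, where the sum runs over all words j|_B = (j_α)_{α∈B} ∈ {1,…,n}^{B} measurable with respect to π_1|_B. -/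
open MeasureTheory ProbabilityTheory Finset

noncomputable section

instance permMS (n : ℕ) : MeasurableSpace (Equiv.Perm (Fin n)) := ⊤

/-- The uniform probability measure on the set of all `n!` permutations of `{1,…,n}`. -/
def permMeasure (n : ℕ) : Measure (Equiv.Perm (Fin n)) :=
  (PMF.uniformOfFintype (Equiv.Perm (Fin n))).toMeasure

/-- The rank `Q_i` of the random permutation, as a real number in `{1,…,n}`. -/
def Qr (n : ℕ) (i : Fin n) (σ : Equiv.Perm (Fin n)) : ℝ := (σ i : ℕ) + 1

/-- The centralized and normalized rank `Z_i = sqrt(12/(n²−1))·(Q_i − (n+1)/2)`. -/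
def Zr (n : ℕ) (i : Fin n) (σ : Equiv.Perm (Fin n)) : ℝ :=
  Real.sqrt (12 / ((n : ℝ) ^ 2 - 1)) * (Qr n i σ - ((n : ℝ) + 1) / 2)


attribute [local instance] Classical.propDecidable

/-- `P` is a set partition of the (finite) index type `ι`: its blocks are nonempty and
every index lies in exactly one block. -/
def IsSetPartition {ι : Type*} [Fintype ι] (P : Finset (Finset ι)) : Prop :=
  (∀ A ∈ P, A.Nonempty) ∧ ∀ i : ι, ∃! A : Finset ι, A ∈ P ∧ i ∈ A

/-- A perfect matching: a set partition all of whose blocks have two elements. -/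
def IsPerfectMatching {ι : Type*} [Fintype ι] (P : Finset (Finset ι)) : Prop :=
  IsSetPartition P ∧ ∀ A ∈ P, A.card = 2

/-- The joint cumulant `C(ξ_1,…,ξ_N) = Σ_{π} (−1)^{#π−1}(#π−1)! Π_{A∈π} E[Π_{i∈A} ξ_i]`,
where the sum runs over all set partitions of the index set. -/
def jointCumulant {Ω : Type*} [MeasurableSpace Ω] (μ : Measure Ω)
    {ι : Type*} [Fintype ι] (ξ : ι → Ω → ℝ) : ℝ :=
  ∑ P ∈ Finset.univ.filter (fun P : Finset (Finset ι) => IsSetPartition P),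
    (-1 : ℝ) ^ (P.card - 1) * (Nat.factorial (P.card - 1) : ℝ) *
      ∏ A ∈ P, ∫ ω, (∏ i ∈ A, ξ i ω) ∂μ

/-- `E_σ(ξ) = Π_{A∈σ} E[Π_{i∈A} ξ_i]`. -/
def momProd {Ω : Type*} [MeasurableSpace Ω] (μ : Measure Ω)
    {ι : Type*} (P : Finset (Finset ι)) (ξ : ι → Ω → ℝ) : ℝ :=
  ∏ A ∈ P, ∫ ω, (∏ i ∈ A, ξ i ω) ∂μ

/-- `C_π(ξ) = Π_{A∈π} C({ξ_i}_{i∈A})`, the product over the blocks of `π` of the joint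
cumulants of the variables indexed by each block. -/
def cumProd {Ω : Type*} [MeasurableSpace Ω] (μ : Measure Ω)
    {ι : Type*} [Fintype ι] (P : Finset (Finset ι)) (ξ : ι → Ω → ℝ) : ℝ :=
  ∏ A ∈ P, jointCumulant μ (fun a : {x // x ∈ A} => ξ a.1)

/-- The relation generating the join `P ∨ Q` of two set partitions: the equivalence closure
of "lying in a common block of `P` or of `Q`". -/
def joinRel {ι : Type*} (P Q : Finset (Finset ι)) : ι → ι → Prop :=
  Relation.EqvGen fun a b => (∃ A ∈ P, a ∈ A ∧ b ∈ A) ∨ (∃ A ∈ Q, a ∈ A ∧ b ∈ A)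

/-- `B` is a block of the join `P ∨ Q`, i.e. an equivalence class of `joinRel P Q`. -/
def IsJoinBlock {ι : Type*} [Fintype ι] (P Q : Finset (Finset ι)) (B : Finset ι) : Prop :=
  ∃ a : ι, B = Finset.univ.filter (fun b => joinRel P Q a b)

/-- The set of blocks of the join `P ∨ Q`. -/
def joinBlocks {ι : Type*} [Fintype ι] (P Q : Finset (Finset ι)) : Finset (Finset ι) :=
  Finset.univ.filter (fun B : Finset ι => IsJoinBlock P Q B)

/-- `#(P ∨ Q)`, the number of blocks of the join of two set partitions. -/
def joinCard {ι : Type*} [Fintype ι] (P Q : Finset (Finset ι)) : ℕ :=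
  (joinBlocks P Q).card

/-- A word `j` is `π`-measurable if `j_α = j_β` whenever `α, β` lie in the same block. -/
def WordMeasurable {ι κ : Type*} (P : Finset (Finset ι)) (j : ι → κ) : Prop :=
  ∀ A ∈ P, ∀ a ∈ A, ∀ b ∈ A, j a = j b

/-!
Each factor is a joint cumulant of the functions `σ ↦ Z(σ(j_α))` of a uniform random permutation
`σ`, and such a cumulant is `O(n^{1-d})` when the positions `j_α` take `d` distinct values. This is
proved by induction on the number of variables plus `d`. If some position is used by a single
variable, moving it to any of the `n - (d - 1)` positions not used by the others does not change
the cumulant, while the sum of the moved variables is a constant minus the variables placed at the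
other `d - 1` positions; as cumulants are multilinear and vanish on constants, `(n - d + 1) κ` is a
sum of `d - 1` cumulants with only `d - 1` distinct positions. Otherwise two variables share a
position, and the Leonov–Shiryaev formula merges them.

Since `B` is a block of `π ∨ π₁` and the word `j` is constant on the blocks of `π₁`, the `m`
blocks `A` of `π` inside `B` satisfy `∑_A #j(A) ≥ #j(B) + m - 1`, so the product of their
cumulants is `O(n^{1 - #j(B)})`. There are at most `C n^d` words taking `d` values, so the whole
sum is `O(n)`, and the exponent is at least `𝔞 - 2 ≥ 1` for the block with `𝔞 ≥ 3`.
-/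

open scoped BigOperators

section Partitions

variable {ι : Type*}

def IsPartitionOf (A : Finset ι) (P : Finset (Finset ι)) : Prop :=
  (∀ D ∈ P, D.Nonempty ∧ D ⊆ A) ∧ ∀ a ∈ A, ∃ D ∈ P, a ∈ D ∧ ∀ E ∈ P, a ∈ E → E = D

def partitionsOf [Fintype ι] (A : Finset ι) : Finset (Finset (Finset ι)) :=
  univ.filter (IsPartitionOf A)

/-- The block of `P` containing `a`, with junk value `∅` if there is none. -/
def blockOf (P : Finset (Finset ι)) (a : ι) : Finset ι :=
  if h : ∃ D ∈ P, a ∈ D then h.choose else ∅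

@[simp] lemma mem_partitionsOf [Fintype ι] {A : Finset ι} {P : Finset (Finset ι)} :
    P ∈ partitionsOf A ↔ IsPartitionOf A P := by
  simp [partitionsOf]

namespace IsPartitionOf

variable {A : Finset ι} {P : Finset (Finset ι)}

lemma nonempty_of_mem (hP : IsPartitionOf A P) {D : Finset ι} (hD : D ∈ P) : D.Nonempty :=
  (hP.1 D hD).1

lemma subset_of_mem (hP : IsPartitionOf A P) {D : Finset ι} (hD : D ∈ P) : D ⊆ A :=
  (hP.1 D hD).2

lemma exists_mem (hP : IsPartitionOf A P) {a : ι} (ha : a ∈ A) : ∃ D ∈ P, a ∈ D := by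
  obtain ⟨D, hD, haD, -⟩ := hP.2 a ha
  exact ⟨D, hD, haD⟩

lemma eq_of_mem_of_mem (hP : IsPartitionOf A P) {a : ι} {D E : Finset ι} (hD : D ∈ P)
    (hE : E ∈ P) (haD : a ∈ D) (haE : a ∈ E) : D = E := by
  obtain ⟨F, -, -, hF⟩ := hP.2 a (hP.subset_of_mem hD haD)
  rw [hF D hD haD, hF E hE haE]

lemma blockOf_mem (hP : IsPartitionOf A P) {a : ι} (ha : a ∈ A) :
    blockOf P a ∈ P ∧ a ∈ blockOf P a := by
  have h := hP.exists_mem ha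
  rw [blockOf, dif_pos h]
  exact h.choose_spec

lemma blockOf_eq (hP : IsPartitionOf A P) {a : ι} {D : Finset ι} (hD : D ∈ P) (haD : a ∈ D) :
    blockOf P a = D :=
  have h := hP.blockOf_mem (hP.subset_of_mem hD haD)
  hP.eq_of_mem_of_mem h.1 hD h.2 haD

lemma disjoint_of_ne (hP : IsPartitionOf A P) {D E : Finset ι} (hD : D ∈ P) (hE : E ∈ P)
    (hDE : D ≠ E) : Disjoint D E :=
  disjoint_left.mpr fun _ haD haE => hDE (hP.eq_of_mem_of_mem hD hE haD haE)

lemma pairwiseDisjoint (hP : IsPartitionOf A P) : (P : Set (Finset ι)).PairwiseDisjoint id :=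
  fun _ hD _ hE => hP.disjoint_of_ne hD hE

lemma biUnion_eq [DecidableEq ι] (hP : IsPartitionOf A P) : P.biUnion id = A := by
  ext a
  simp only [mem_biUnion, id_eq]
  exact ⟨fun ⟨D, hD, haD⟩ => hP.subset_of_mem hD haD, hP.exists_mem⟩

lemma prod_prod_eq [DecidableEq ι] {M : Type*} [CommMonoid M] (hP : IsPartitionOf A P)
    (g : ι → M) : ∏ D ∈ P, ∏ i ∈ D, g i = ∏ i ∈ A, g i := by
  rw [← hP.biUnion_eq, prod_biUnion hP.pairwiseDisjoint]
  rfl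

lemma card_le [DecidableEq ι] (hP : IsPartitionOf A P) : #P ≤ #A :=
  hP.biUnion_eq ▸ card_le_card_biUnion hP.pairwiseDisjoint fun _ => hP.nonempty_of_mem

lemma mem_biUnion_iff [DecidableEq ι] (hP : IsPartitionOf A P) {T : Finset (Finset ι)} (hT : T ⊆ P)
    {a : ι} (ha : a ∈ A) : a ∈ T.biUnion id ↔ blockOf P a ∈ T := by
  refine ⟨fun h => ?_, fun h => mem_biUnion.mpr ⟨_, h, (hP.blockOf_mem ha).2⟩⟩
  obtain ⟨D, hD, haD⟩ := mem_biUnion.mp h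
  rwa [hP.blockOf_eq (hT hD) haD]

lemma of_subset [DecidableEq ι] (hP : IsPartitionOf A P) {T : Finset (Finset ι)} (hT : T ⊆ P) :
    IsPartitionOf (T.biUnion id) T := by
  refine ⟨fun D hD => ⟨hP.nonempty_of_mem (hT hD), subset_biUnion_of_mem id hD⟩,
    fun a ha => ?_⟩
  obtain ⟨D, hD, haD⟩ := mem_biUnion.mp ha
  exact ⟨D, hD, haD, fun E hE haE => hP.eq_of_mem_of_mem (hT hE) (hT hD) haE haD⟩

lemma biUnion_sdiff [DecidableEq ι] (hP : IsPartitionOf A P) {T : Finset (Finset ι)} (hT : T ⊆ P) :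
    (P \ T).biUnion id = A \ T.biUnion id := by
  ext a
  constructor
  · intro h
    obtain ⟨D, hD, haD⟩ := mem_biUnion.mp h
    obtain ⟨hDP, hDT⟩ := mem_sdiff.mp hD
    have ha := hP.subset_of_mem hDP haD
    rw [mem_sdiff, hP.mem_biUnion_iff hT ha, hP.blockOf_eq hDP haD]
    exact ⟨ha, hDT⟩
  · intro h
    obtain ⟨ha, haT⟩ := mem_sdiff.mp h
    rw [hP.mem_biUnion_iff hT ha] at haT
    exact mem_biUnion.mpr
      ⟨_, mem_sdiff.mpr ⟨(hP.blockOf_mem ha).1, haT⟩, (hP.blockOf_mem ha).2⟩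

lemma union [DecidableEq ι] {A' : Finset ι} {P' : Finset (Finset ι)} (hP : IsPartitionOf A P)
    (hP' : IsPartitionOf A' P') (hAA' : Disjoint A A') : IsPartitionOf (A ∪ A') (P ∪ P') := by
  have cross : ∀ {a D E}, D ∈ P → E ∈ P' → a ∈ D → a ∈ E → False := fun hD hE haD haE =>
    disjoint_left.mp hAA' (hP.subset_of_mem hD haD) (hP'.subset_of_mem hE haE)
  refine ⟨fun D hD => ?_, fun a ha => ?_⟩
  · rcases mem_union.mp hD with hD | hD
    · exact ⟨hP.nonempty_of_mem hD, (hP.subset_of_mem hD).trans subset_union_left⟩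
    · exact ⟨hP'.nonempty_of_mem hD, (hP'.subset_of_mem hD).trans subset_union_right⟩
  · rcases mem_union.mp ha with ha | ha
    · obtain ⟨D, hD, haD⟩ := hP.exists_mem ha
      refine ⟨D, mem_union_left _ hD, haD, fun E hE haE => ?_⟩
      rcases mem_union.mp hE with hE | hE
      · exact hP.eq_of_mem_of_mem hE hD haE haD
      · exact (cross hD hE haD haE).elim
    · obtain ⟨D, hD, haD⟩ := hP'.exists_mem ha
      refine ⟨D, mem_union_right _ hD, haD, fun E hE haE => ?_⟩
      rcases mem_union.mp hE with hE | hE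
      · exact (cross hE hD haE haD).elim
      · exact hP'.eq_of_mem_of_mem hE hD haE haD

lemma disjoint_of_disjoint {A' : Finset ι} {P' : Finset (Finset ι)} (hP : IsPartitionOf A P)
    (hP' : IsPartitionOf A' P') (hAA' : Disjoint A A') : Disjoint P P' := by
  refine disjoint_left.mpr fun D hD hD' => ?_
  obtain ⟨a, ha⟩ := hP.nonempty_of_mem hD
  exact disjoint_left.mp hAA' (hP.subset_of_mem hD ha) (hP'.subset_of_mem hD' ha)

lemma insert_singleton [DecidableEq ι] {t : ι} (ht : t ∉ A) (hP : IsPartitionOf A P) :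
    IsPartitionOf (insert t A) (insert {t} P) := by
  have h := (IsPartitionOf.union (A := {t}) (P := {{t}})
    ⟨by simp, by simp⟩ hP (disjoint_singleton_left.mpr ht))
  simpa using h

lemma singleton (hA : A.Nonempty) : IsPartitionOf A {A} :=
  ⟨by simpa using hA, fun a _ => ⟨A, by simp_all⟩⟩

lemma erase_block [DecidableEq ι] (hP : IsPartitionOf A P) {D : Finset ι} (hD : D ∈ P) :
    IsPartitionOf (A \ D) (P.erase D) := by
  have h := hP.of_subset (erase_subset D P)
  rwa [← sdiff_singleton_eq_erase, hP.biUnion_sdiff (by simpa using hD),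
    singleton_biUnion, id, sdiff_singleton_eq_erase] at h

lemma insert_into_block [DecidableEq ι] {t : ι} (ht : t ∉ A) (hP : IsPartitionOf A P)
    {D : Finset ι} (hD : D ∈ P) : IsPartitionOf (insert t A) (insert (insert t D) (P.erase D)) := by
  have h := (singleton (insert_nonempty t D)).union (hP.erase_block hD)
    (disjoint_insert_left.mpr ⟨fun h => ht (mem_sdiff.mp h).1,
      disjoint_sdiff⟩)
  rwa [← insert_eq, insert_union, union_sdiff_of_subset
    (hP.subset_of_mem hD)] at h

lemma erase_from_block [DecidableEq ι] {t : ι} (hP : IsPartitionOf A P) {D : Finset ι}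
    (hD : D ∈ P) (htD : t ∈ D) (hne : (D.erase t).Nonempty) :
    IsPartitionOf (A.erase t) (insert (D.erase t) (P.erase D)) := by
  have h := (singleton hne).union (hP.erase_block hD)
    (disjoint_of_subset_left (erase_subset t D) disjoint_sdiff)
  have hground : D.erase t ∪ (A \ D) = A.erase t := by
    have := hP.subset_of_mem hD
    ext a
    simp only [mem_union, mem_erase, mem_sdiff]
    grind
  rwa [← insert_eq, hground] at h

lemma erase_point [DecidableEq ι] {t : ι} (ht : t ∉ A)
    (hP : IsPartitionOf (insert t A) P) (hsingle : {t} ∉ P) :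
    IsPartitionOf A (insert ((blockOf P t).erase t) (P.erase (blockOf P t))) ∧
      insert (insert t ((blockOf P t).erase t))
        ((insert ((blockOf P t).erase t) (P.erase (blockOf P t))).erase
          ((blockOf P t).erase t)) = P := by
  obtain ⟨hDt, htDt⟩ := hP.blockOf_mem (mem_insert_self t A)
  have hne : ((blockOf P t).erase t).Nonempty := by
    refine nonempty_iff_ne_empty.mpr fun h => ?_
    rcases (erase_eq_empty_iff _ _).mp h with h | h
    · simp [h] at htDt
    · exact hsingle (h ▸ hDt)
  have hnotMem : (blockOf P t).erase t ∉ P.erase (blockOf P t) := fun h => by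
    obtain ⟨a, ha⟩ := hne
    exact (mem_erase.mp h).1 (hP.eq_of_mem_of_mem (mem_of_mem_erase h) hDt ha
      (mem_of_mem_erase ha))
  refine ⟨?_, ?_⟩
  · simpa [erase_insert ht] using hP.erase_from_block hDt htDt hne
  · rw [insert_erase htDt, erase_insert hnotMem, insert_erase hDt]

end IsPartitionOf

lemma IsSetPartition.isPartitionOf_image_map [DecidableEq ι] {A : Finset ι}
    {P : Finset (Finset {x // x ∈ A})} (hP : IsSetPartition P) :
    IsPartitionOf A (P.image (·.map (Function.Embedding.subtype (· ∈ A)))) := by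
  refine ⟨fun D' hD' => ?_, fun a ha => ?_⟩
  · obtain ⟨D, hD, rfl⟩ := mem_image.mp hD'
    exact ⟨(hP.1 D hD).map, fun x hx => by
      obtain ⟨y, -, rfl⟩ := mem_map.mp hx
      exact y.2⟩
  · obtain ⟨D, ⟨hD, haD⟩, huniq⟩ := hP.2 ⟨a, ha⟩
    refine ⟨_, mem_image_of_mem _ hD, mem_map_of_mem _ haD, fun E' hE' haE => ?_⟩
    obtain ⟨E, hE, rfl⟩ := mem_image.mp hE'
    obtain ⟨y, hy, hya⟩ := mem_map.mp haE
    obtain rfl : y = ⟨a, ha⟩ := Subtype.ext hya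
    rw [huniq E ⟨hE, hy⟩]

lemma IsPartitionOf.isSetPartition_image_subtype [DecidableEq ι] {A : Finset ι}
    {Q : Finset (Finset ι)} (hQ : IsPartitionOf A Q) : IsSetPartition (Q.image (·.subtype (· ∈ A))) := by
  refine ⟨fun D' hD' => ?_, fun a => ?_⟩
  · obtain ⟨D, hD, rfl⟩ := mem_image.mp hD'
    obtain ⟨x, hx⟩ := hQ.nonempty_of_mem hD
    exact ⟨⟨x, hQ.subset_of_mem hD hx⟩, mem_subtype.mpr hx⟩
  · obtain ⟨D, hD, haD, huniq⟩ := hQ.2 a a.2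
    refine ⟨_, ⟨mem_image_of_mem _ hD, mem_subtype.mpr haD⟩, ?_⟩
    rintro _ ⟨hE', haE⟩
    obtain ⟨E, hE, rfl⟩ := mem_image.mp hE'
    rw [huniq E hE (mem_subtype.mp haE)]

end Partitions

section PartitionSums

variable {ι : Type*} [Fintype ι] [DecidableEq ι] {M : Type*} [AddCommMonoid M]

variable {A : Finset ι} {t : ι}

lemma sum_partitionsOf_insert_filter_singleton_mem (ht : t ∉ A) (F : Finset (Finset ι) → M) :
    ∑ P ∈ (partitionsOf (insert t A)).filter ({t} ∈ ·), F P =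
      ∑ R ∈ partitionsOf A, F (insert {t} R) := by
  refine sum_nbij' (fun P => P.erase {t}) (insert {t}) (fun P hP => ?_)
    (fun R hR => ?_) (fun P hP => insert_erase (mem_filter.mp hP).2) (fun R hR => ?_)
    (fun P hP => by rw [insert_erase (mem_filter.mp hP).2])
  · simp only [mem_filter, mem_partitionsOf] at hP ⊢
    have h := hP.1.erase_block hP.2
    rwa [insert_sdiff_of_mem _ (mem_singleton_self t), sdiff_singleton_eq_erase,
      erase_eq_of_notMem ht] at h
  · simp only [mem_filter, mem_partitionsOf] at hR ⊢
    exact ⟨hR.insert_singleton ht, mem_insert_self _ _⟩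
  · exact erase_insert fun h =>
      ht ((mem_partitionsOf.mp hR).subset_of_mem h (mem_singleton_self t))

lemma sum_partitionsOf_insert_filter_singleton_notMem (ht : t ∉ A) (F : Finset (Finset ι) → M) :
    ∑ P ∈ (partitionsOf (insert t A)).filter ({t} ∉ ·), F P =
      ∑ R ∈ partitionsOf A, ∑ D ∈ R, F (insert (insert t D) (R.erase D)) := by
  have ht_notMem : ∀ {R D}, IsPartitionOf A R → D ∈ R → t ∉ D := fun hR hD htD =>
    ht (hR.subset_of_mem hD htD)
  have herase : ∀ P ∈ (partitionsOf (insert t A)).filter ({t} ∉ ·), _ := fun P hP =>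
    (mem_partitionsOf.mp (mem_filter.mp hP).1).erase_point ht (mem_filter.mp hP).2
  rw [sum_sigma' (partitionsOf A) (fun R => R)]
  refine sum_nbij'
    (fun P => ⟨insert ((blockOf P t).erase t) (P.erase (blockOf P t)), (blockOf P t).erase t⟩)
    (fun x => insert (insert t x.2) (x.1.erase x.2)) (fun P hP => ?_) (fun x hx => ?_)
    (fun P hP => (herase P hP).2) (fun x hx => ?_) (fun P hP => by rw [(herase P hP).2])
  · exact mem_sigma.mpr ⟨mem_partitionsOf.mpr (herase P hP).1, mem_insert_self _ _⟩
  · obtain ⟨R, D⟩ := x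
    obtain ⟨hR, hD⟩ := mem_sigma.mp hx
    have hR := mem_partitionsOf.mp hR
    refine mem_filter.mpr ⟨mem_partitionsOf.mpr (hR.insert_into_block ht hD), fun h => ?_⟩
    rcases mem_insert.mp h with h | h
    · obtain ⟨a, ha⟩ := hR.nonempty_of_mem hD
      have : a = t := mem_singleton.mp (h ▸ mem_insert_of_mem ha)
      exact ht_notMem hR hD (this ▸ ha)
    · exact ht (hR.subset_of_mem (mem_of_mem_erase h) (mem_singleton_self t))
  · obtain ⟨R, D⟩ := x
    obtain ⟨hR, hD⟩ := mem_sigma.mp hx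
    have hR := mem_partitionsOf.mp hR
    have hblock : blockOf (insert (insert t D) (R.erase D)) t = insert t D :=
      (hR.insert_into_block ht hD).blockOf_eq (mem_insert_self _ _) (mem_insert_self t D)
    have hnotMem : insert t D ∉ R.erase D := fun h =>
      ht_notMem hR (mem_of_mem_erase h) (mem_insert_self t D)
    simp only [hblock, erase_insert (ht_notMem hR hD), erase_insert hnotMem, insert_erase hD]

lemma sum_partitionsOf_insert (ht : t ∉ A) (F : Finset (Finset ι) → M) :
    ∑ P ∈ partitionsOf (insert t A), F P =
      ∑ R ∈ partitionsOf A, (F (insert {t} R) + ∑ D ∈ R, F (insert (insert t D) (R.erase D))) := by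
  rw [sum_add_distrib, ← sum_filter_add_sum_filter_not _ ({t} ∈ ·),
    sum_partitionsOf_insert_filter_singleton_mem ht,
    sum_partitionsOf_insert_filter_singleton_notMem ht]

lemma sum_partitionsOf_insert_filter_mem_blockOf {s : ι} (hs : s ∈ A)
    (ht : t ∉ A) (F : Finset (Finset ι) → M) :
    ∑ P ∈ (partitionsOf (insert t A)).filter (fun P => t ∈ blockOf P s), F P =
      ∑ R ∈ partitionsOf A, F (insert (insert t (blockOf R s)) (R.erase (blockOf R s))) := by
  rw [sum_filter, sum_partitionsOf_insert ht]
  refine sum_congr rfl fun R hR => ?_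
  have hR := mem_partitionsOf.mp hR
  obtain ⟨hDs, hsDs⟩ := hR.blockOf_mem hs
  have htDs : t ∉ blockOf R s := fun h => ht (hR.subset_of_mem hDs h)
  have hsingle : blockOf (insert {t} R) s = blockOf R s :=
    (hR.insert_singleton ht).blockOf_eq (mem_insert_of_mem hDs) hsDs
  rw [if_neg (hsingle ▸ htDs), zero_add, sum_eq_single (blockOf R s)]
  · refine if_pos ?_
    rw [(hR.insert_into_block ht hDs).blockOf_eq (mem_insert_self _ _)
      (mem_insert_of_mem hsDs)]
    exact mem_insert_self t _
  · intro D hD hDne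
    refine if_neg ?_
    rw [(hR.insert_into_block ht hD).blockOf_eq
      (mem_insert_of_mem (mem_erase.mpr ⟨hDne.symm, hDs⟩)) hsDs]
    exact htDs
  · exact fun h => (h hDs).elim

/-- Pairs of partitions of complementary subsets of `A` correspond to partitions of `A` together
with a set of distinguished blocks. -/
lemma sum_powerset_sum_partitionsOf (A : Finset ι)
    (F : Finset ι → Finset (Finset ι) → Finset (Finset ι) → M) :
    ∑ J ∈ A.powerset, ∑ P₁ ∈ partitionsOf J, ∑ P₂ ∈ partitionsOf (A \ J), F J P₁ P₂ =
      ∑ P ∈ partitionsOf A, ∑ T ∈ P.powerset, F (T.biUnion id) T (P \ T) := by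
  simp only [sum_sigma']
  refine sum_nbij' (fun x => ⟨x.2.1 ∪ x.2.2, x.2.1⟩)
    (fun y => ⟨y.2.biUnion id, y.2, y.1 \ y.2⟩) (fun x hx => ?_) (fun y hy => ?_)
    (fun x hx => ?_) (fun y hy => ?_) (fun x hx => ?_)
  · obtain ⟨J, P₁, P₂⟩ := x
    simp only [mem_sigma, mem_powerset, mem_partitionsOf] at hx ⊢
    obtain ⟨hJ, h₁, h₂⟩ := hx
    refine ⟨?_, subset_union_left⟩
    simpa [union_sdiff_of_subset hJ] using h₁.union h₂ disjoint_sdiff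
  · obtain ⟨P, T⟩ := y
    simp only [mem_sigma, mem_powerset, mem_partitionsOf] at hy ⊢
    obtain ⟨hP, hT⟩ := hy
    refine ⟨?_, hP.of_subset hT, ?_⟩
    · exact hP.biUnion_eq ▸ biUnion_subset_biUnion_of_subset_left id hT
    · simpa [hP.biUnion_sdiff hT] using hP.of_subset (sdiff_subset (s := P) (t := T))
  · obtain ⟨J, P₁, P₂⟩ := x
    simp only [mem_sigma, mem_powerset, mem_partitionsOf] at hx
    obtain ⟨hJ, h₁, h₂⟩ := hx
    rw [h₁.biUnion_eq, union_sdiff_cancel_left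
      (h₁.disjoint_of_disjoint h₂ disjoint_sdiff)]
  · obtain ⟨P, T⟩ := y
    simp only [mem_sigma, mem_powerset] at hy
    simp only [union_sdiff_of_subset hy.2]
  · obtain ⟨J, P₁, P₂⟩ := x
    simp only [mem_sigma, mem_powerset, mem_partitionsOf] at hx
    obtain ⟨hJ, h₁, h₂⟩ := hx
    rw [h₁.biUnion_eq, union_sdiff_cancel_left
      (h₁.disjoint_of_disjoint h₂ disjoint_sdiff)]

end PartitionSums

section Weights

/-- `partitionWeight k = (-1)^(k-1) (k-1)!` is the Möbius function `μ(π, 1̂)` of the partition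
lattice at a partition `π` with `k` blocks. -/
def partitionWeight (k : ℕ) : ℝ := (-1) ^ (k - 1) * (k - 1).factorial

lemma sum_powerset_filter_mem_notMem {α M : Type*} [DecidableEq α] [AddCommMonoid M]
    {Q : Finset α} {a b : α} (ha : a ∈ Q) (hb : b ∈ Q) (hab : a ≠ b) (f : Finset α → M) :
    ∑ T ∈ Q.powerset.filter (fun T => a ∈ T ∧ b ∉ T), f T =
      ∑ T ∈ ((Q.erase a).erase b).powerset, f (insert a T) := by
  have hQ : Q = insert a (insert b ((Q.erase a).erase b)) := by
    rw [insert_erase (mem_erase.mpr ⟨hab.symm, hb⟩), insert_erase ha]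
  have haQ : a ∉ insert b ((Q.erase a).erase b) := by simp [hab]
  have hbQ : b ∉ (Q.erase a).erase b := by simp
  conv_lhs => rw [hQ]
  rw [sum_filter, sum_powerset_insert haQ, sum_powerset_insert hbQ,
    sum_powerset_insert hbQ]
  have hnot : ∀ t ∈ ((Q.erase a).erase b).powerset, a ∉ t ∧ b ∉ t := fun t ht =>
    ⟨fun h => haQ (mem_insert_of_mem (mem_powerset.mp ht h)),
      fun h => hbQ (mem_powerset.mp ht h)⟩
  rw [sum_eq_zero fun t ht => by simp [hnot t ht], sum_eq_zero fun t ht => by simp,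
    sum_eq_zero (s := ((Q.erase a).erase b).powerset)
      (f := fun t => if a ∈ insert a (insert b t) ∧ b ∉ insert a (insert b t) then
        f (insert a (insert b t)) else 0) fun t ht => by simp]
  rw [zero_add, zero_add, add_zero]
  refine sum_congr rfl fun t ht => ?_
  simp [hnot t ht, hab.symm]

lemma choose_mul_partitionWeight_mul {q m : ℕ} (hm : m ≤ q) :
    (q.choose m : ℝ) * (partitionWeight (m + 1) * partitionWeight (q + 1 - m)) =
      (-1) ^ q * q.factorial := by
  have hfac : (q.choose m : ℝ) * m.factorial * (q - m).factorial = q.factorial := by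
    exact_mod_cast Nat.choose_mul_factorial_mul_factorial hm
  have hsign : (-1 : ℝ) ^ m * (-1) ^ (q - m) = (-1) ^ q := by
    rw [← pow_add, Nat.add_sub_cancel' hm]
  rw [partitionWeight, partitionWeight, Nat.add_sub_cancel, show q + 1 - m - 1 = q - m by omega]
  linear_combination (q.choose m * m.factorial * (q - m).factorial : ℝ) * hsign +
    (-1 : ℝ) ^ q * hfac

lemma sum_powerset_filter_partitionWeight_mul {α : Type*} [DecidableEq α] {Q : Finset α}
    {a b : α} (ha : a ∈ Q) (hb : b ∈ Q) (hab : a ≠ b) :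
    ∑ T ∈ Q.powerset.filter (fun T => a ∈ T ∧ b ∉ T),
      partitionWeight #T * partitionWeight #(Q \ T) = -partitionWeight #Q := by
  set Q' := (Q.erase a).erase b with hQ'
  have hcard : #Q = #Q' + 2 := by
    rw [hQ', card_erase_of_mem (mem_erase.mpr ⟨hab.symm, hb⟩),
      card_erase_of_mem ha]
    have := card_le_card (insert_subset ha (singleton_subset_iff.mpr hb))
    rw [card_pair hab] at this
    omega
  rw [sum_powerset_filter_mem_notMem ha hb hab, ← hQ']
  have hterm : ∀ T ∈ Q'.powerset, partitionWeight #(insert a T) *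
      partitionWeight #(Q \ insert a T) =
      partitionWeight (#T + 1) * partitionWeight (#Q' + 1 - #T) := by
    intro T hT
    have hT := mem_powerset.mp hT
    have haT : a ∉ T := fun h => by simpa [hQ'] using hT h
    have hsub : insert a T ⊆ Q := insert_subset ha fun x hx => by
      simpa [hQ'] using (mem_erase.mp (mem_erase.mp (hT hx)).2).2
    have := card_le_card hT
    rw [card_sdiff_of_subset hsub, card_insert_of_notMem haT, hcard]
    congr 2
    omega
  rw [sum_congr rfl hterm, sum_powerset_apply_card
    (fun m => partitionWeight (m + 1) * partitionWeight (#Q' + 1 - m))]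
  simp only [nsmul_eq_mul]
  rw [sum_congr rfl fun m hm =>
    choose_mul_partitionWeight_mul (Nat.lt_succ_iff.mp (mem_range.mp hm))]
  rw [sum_const, card_range, nsmul_eq_mul, hcard, partitionWeight,
    show #Q' + 2 - 1 = #Q' + 1 by omega, Nat.factorial_succ, pow_succ]
  push_cast
  ring

lemma partitionWeight_succ {r : ℕ} (hr : r ≠ 0) :
    partitionWeight (r + 1) = -r * partitionWeight r := by
  obtain ⟨r, rfl⟩ := Nat.exists_eq_succ_of_ne_zero hr
  simp only [partitionWeight, Nat.add_sub_cancel, Nat.factorial_succ, pow_succ]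
  push_cast
  ring

end Weights

section Cumulant

variable {Ω ι : Type*} [Fintype Ω]

def mixedMoment (D : Finset ι) (ξ : ι → Ω → ℝ) : ℝ := 𝔼 ω, ∏ i ∈ D, ξ i ω

lemma mixedMoment_update_of_notMem [DecidableEq ι] {D : Finset ι} {s : ι} (hs : s ∉ D)
    (ξ : ι → Ω → ℝ) (g : Ω → ℝ) : mixedMoment D (Function.update ξ s g) = mixedMoment D ξ :=
  expect_congr rfl fun ω _ => prod_congr rfl fun i hi => by
    rw [Function.update_of_ne (ne_of_mem_of_not_mem hi hs)]

lemma mixedMoment_update_of_mem [DecidableEq ι] {D : Finset ι} {s : ι} (hs : s ∈ D) (ξ : ι → Ω → ℝ)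
    (g : Ω → ℝ) :
    mixedMoment D (Function.update ξ s g) = 𝔼 ω, g ω * ∏ i ∈ D.erase s, ξ i ω := by
  refine expect_congr rfl fun ω _ => ?_
  rw [← mul_prod_erase D _ hs, Function.update_self]
  congr 1
  exact prod_congr rfl fun i hi => by rw [Function.update_of_ne (ne_of_mem_erase hi)]

lemma abs_mixedMoment_le [Nonempty Ω] {D : Finset ι} {ξ : ι → Ω → ℝ} {b : ι → ℝ}
    (hb : ∀ i ∈ D, ∀ ω, |ξ i ω| ≤ b i) : |mixedMoment D ξ| ≤ ∏ i ∈ D, b i := by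
  refine (abs_expect_le _ _).trans (expect_le univ_nonempty fun ω _ => ?_)
  rw [abs_prod]
  exact prod_le_prod (fun i _ => abs_nonneg _) fun i hi => hb i hi ω

variable [Fintype ι]

def cumulant (A : Finset ι) (ξ : ι → Ω → ℝ) : ℝ :=
  ∑ P ∈ partitionsOf A, partitionWeight #P * ∏ D ∈ P, mixedMoment D ξ

lemma integral_uniformOfFintype [Nonempty Ω] [MeasurableSpace Ω] [MeasurableSingletonClass Ω]
    (f : Ω → ℝ) : ∫ ω, f ω ∂(PMF.uniformOfFintype Ω).toMeasure = 𝔼 ω, f ω := by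
  rw [integral_fintype Integrable.of_finite, Fintype.expect_eq_sum_div_card, sum_div]
  refine sum_congr rfl fun ω _ => ?_
  rw [measureReal_def, PMF.toMeasure_apply_singleton _ _ (MeasurableSet.singleton ω),
    PMF.uniformOfFintype_apply, smul_eq_mul, ENNReal.toReal_inv]
  simp [div_eq_inv_mul]

lemma jointCumulant_uniformOfFintype [DecidableEq ι] [Nonempty Ω] [MeasurableSpace Ω]
    [MeasurableSingletonClass Ω] (A : Finset ι) (ξ : ι → Ω → ℝ) :
    jointCumulant (PMF.uniformOfFintype Ω).toMeasure (fun a : {x // x ∈ A} => ξ a) =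
      cumulant A ξ := by
  have hinj : Set.InjOn (fun D : Finset {x // x ∈ A} => D.map (Function.Embedding.subtype _))
      Set.univ := fun _ _ _ _ h => map_injective _ h
  refine sum_nbij' (·.image (fun D => D.map (Function.Embedding.subtype _)))
    (·.image (·.subtype (· ∈ A))) (fun P hP => ?_) (fun Q hQ => ?_) (fun P _ => ?_)
    (fun Q hQ => ?_) (fun P _ => ?_)
  · exact mem_partitionsOf.mpr (mem_filter.mp hP).2.isPartitionOf_image_map
  · exact mem_filter.mpr ⟨mem_univ _,
      (mem_partitionsOf.mp hQ).isSetPartition_image_subtype⟩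
  · rw [image_image]
    refine (image_congr fun D _ => ?_).trans image_id
    ext a
    simp
  · rw [image_image]
    refine (image_congr fun D hD => ?_).trans image_id
    simpa [subtype_map] using fun x hx => (mem_partitionsOf.mp hQ).subset_of_mem hD hx
  · rw [card_image_of_injOn (hinj.mono (Set.subset_univ _)), partitionWeight,
      prod_image (fun _ _ _ _ h => hinj trivial trivial h)]
    congr 1
    refine prod_congr rfl fun D _ => ?_
    rw [integral_uniformOfFintype, mixedMoment]
    simp [prod_map]

lemma cumulant_congr {A : Finset ι} {ξ ξ' : ι → Ω → ℝ}
    (h : ∀ D ⊆ A, D.Nonempty → mixedMoment D ξ = mixedMoment D ξ') :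
    cumulant A ξ = cumulant A ξ' := by
  refine sum_congr rfl fun P hP => ?_
  have hP := mem_partitionsOf.mp hP
  rw [prod_congr rfl fun D hD => h D (hP.subset_of_mem hD) (hP.nonempty_of_mem hD)]

lemma cumulant_congr_of_eqOn {A : Finset ι} {ξ ξ' : ι → Ω → ℝ} (h : ∀ i ∈ A, ξ i = ξ' i) :
    cumulant A ξ = cumulant A ξ' :=
  cumulant_congr fun D hD _ => expect_congr rfl fun ω _ =>
    prod_congr rfl fun i hi => by rw [h i (hD hi)]

variable [DecidableEq ι] {A : Finset ι} {s t : ι}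

/-- Expanding the moment of the block containing `s` exhibits the cumulant as a linear
functional of the `s`-th variable. -/
lemma cumulant_update (hs : s ∈ A) (ξ : ι → Ω → ℝ) (g : Ω → ℝ) :
    cumulant A (Function.update ξ s g) = ∑ P ∈ partitionsOf A, partitionWeight #P *
      (𝔼 ω, g ω * ∏ i ∈ (blockOf P s).erase s, ξ i ω) *
        ∏ D ∈ P.erase (blockOf P s), mixedMoment D ξ := by
  refine sum_congr rfl fun P hP => ?_
  have hP := mem_partitionsOf.mp hP
  obtain ⟨hDs, hsDs⟩ := hP.blockOf_mem hs
  rw [mul_assoc, ← mul_prod_erase P _ hDs, mixedMoment_update_of_mem hsDs]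
  congr 2
  refine prod_congr rfl fun D hD => mixedMoment_update_of_notMem (fun hsD => ?_) ξ g
  exact (mem_erase.mp hD).1 (hP.blockOf_eq (mem_of_mem_erase hD) hsD).symm

lemma cumulant_update_add (hs : s ∈ A) (ξ : ι → Ω → ℝ) (g h : Ω → ℝ) :
    cumulant A (Function.update ξ s (g + h)) =
      cumulant A (Function.update ξ s g) + cumulant A (Function.update ξ s h) := by
  simp only [cumulant_update hs, ← sum_add_distrib, Pi.add_apply, add_mul, mul_add,
    expect_add_distrib]

lemma cumulant_update_zero (hs : s ∈ A) (ξ : ι → Ω → ℝ) :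
    cumulant A (Function.update ξ s 0) = 0 := by
  simp [cumulant_update hs]

lemma cumulant_update_sum (hs : s ∈ A) (ξ : ι → Ω → ℝ) {κ : Type*}
    (Y : Finset κ) (g : κ → Ω → ℝ) :
    cumulant A (Function.update ξ s (∑ y ∈ Y, g y)) =
      ∑ y ∈ Y, cumulant A (Function.update ξ s (g y)) := by
  classical
  induction Y using Finset.induction_on with
  | empty => simpa using cumulant_update_zero hs ξ
  | insert y Y hy ih => rw [sum_insert hy, cumulant_update_add hs, ih, sum_insert hy]

lemma cumulant_update_neg (hs : s ∈ A) (ξ : ι → Ω → ℝ) (g : Ω → ℝ) :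
    cumulant A (Function.update ξ s (-g)) = -cumulant A (Function.update ξ s g) := by
  rw [eq_neg_iff_add_eq_zero, ← cumulant_update_add hs, neg_add_cancel, cumulant_update_zero hs]

lemma cumulant_update_const [Nonempty Ω] (hs : s ∈ A) (hA : 2 ≤ #A)
    (ξ : ι → Ω → ℝ) (c : ℝ) : cumulant A (Function.update ξ s fun _ => c) = 0 := by
  have hs' : s ∉ A.erase s := notMem_erase s A
  rw [cumulant, ← insert_erase hs, sum_partitionsOf_insert hs']
  refine sum_eq_zero fun R hR => ?_
  have hR := mem_partitionsOf.mp hR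
  have hRne : #R ≠ 0 := by
    obtain ⟨a, ha⟩ : (A.erase s).Nonempty := by
      rw [← card_pos, card_erase_of_mem hs]; omega
    obtain ⟨D, hD, -⟩ := hR.exists_mem ha
    exact card_ne_zero_of_mem hD
  have hsD : ∀ D ∈ R, s ∉ D := fun D hD h => hs' (hR.subset_of_mem hD h)
  have hrest : ∀ D ∈ R, mixedMoment D (Function.update ξ s fun _ => c) = mixedMoment D ξ :=
    fun D hD => mixedMoment_update_of_notMem (hsD D hD) ξ _
  have hsingle : {s} ∉ R := fun h => hsD _ h (mem_singleton_self s)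
  have hmerged : ∀ D ∈ R, partitionWeight #(insert (insert s D) (R.erase D)) *
      ∏ E ∈ insert (insert s D) (R.erase D), mixedMoment E (Function.update ξ s fun _ => c) =
      partitionWeight #R * (c * ∏ E ∈ R, mixedMoment E ξ) := by
    intro D hD
    have hnotMem : insert s D ∉ R.erase D := fun h =>
      hsD _ (mem_of_mem_erase h) (mem_insert_self s D)
    rw [card_insert_of_notMem hnotMem, card_erase_add_one hD,
      prod_insert hnotMem, mixedMoment_update_of_mem (mem_insert_self s D),
      erase_insert (hsD D hD), ← mul_expect,
      prod_congr rfl fun E hE => hrest E (mem_of_mem_erase hE),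
      ← mul_prod_erase R _ hD, mixedMoment]
    ring
  rw [sum_congr rfl hmerged, card_insert_of_notMem hsingle,
    prod_insert hsingle, prod_congr rfl hrest, sum_const, nsmul_eq_mul,
    partitionWeight_succ hRne]
  simp [mixedMoment]
  ring

lemma abs_cumulant_le [Nonempty Ω] {ξ : ι → Ω → ℝ} {b : ι → ℝ}
    (hb : ∀ i ∈ A, ∀ ω, |ξ i ω| ≤ b i) :
    |cumulant A ξ| ≤ #(partitionsOf A) * (#A).factorial * ∏ i ∈ A, b i := by
  have hb0 : ∀ i ∈ A, 0 ≤ b i := fun i hi => (abs_nonneg _).trans (hb i hi (Classical.arbitrary Ω))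
  rw [mul_assoc, ← nsmul_eq_mul, ← sum_const]
  refine (abs_sum_le_sum_abs _ _).trans (sum_le_sum fun P hP => ?_)
  have hP := mem_partitionsOf.mp hP
  rw [abs_mul, abs_prod]
  refine mul_le_mul ?_ ?_ (prod_nonneg fun _ _ => abs_nonneg _) (by positivity)
  · rw [partitionWeight, abs_mul, abs_pow, abs_neg, abs_one, one_pow, one_mul, Nat.abs_cast]
    exact_mod_cast Nat.factorial_le ((Nat.sub_le _ 1).trans hP.card_le)
  · rw [← hP.prod_prod_eq]
    exact prod_le_prod (fun _ _ => abs_nonneg _) fun D hD =>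
      abs_mixedMoment_le fun i hi => hb i (hP.subset_of_mem hD hi)

lemma cumulant_update_mul (hs : s ∈ A) (ht : t ∈ A) (hst : s ≠ t)
    (ξ : ι → Ω → ℝ) :
    cumulant (A.erase t) (Function.update ξ s (ξ s * ξ t)) =
      ∑ P ∈ (partitionsOf A).filter (fun P => t ∈ blockOf P s),
        partitionWeight #P * ∏ D ∈ P, mixedMoment D ξ := by
  have ht' : t ∉ A.erase t := notMem_erase t A
  have h := sum_partitionsOf_insert_filter_mem_blockOf (mem_erase.mpr ⟨hst, hs⟩) ht'
    fun P => partitionWeight #P * ∏ D ∈ P, mixedMoment D ξ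
  rw [insert_erase ht] at h
  rw [h]
  refine sum_congr rfl fun R hR => ?_
  have hR := mem_partitionsOf.mp hR
  obtain ⟨hDs, hsDs⟩ := hR.blockOf_mem (mem_erase.mpr ⟨hst, hs⟩)
  have htDs : t ∉ blockOf R s := fun h => ht' (hR.subset_of_mem hDs h)
  have hnotMem : insert t (blockOf R s) ∉ R.erase (blockOf R s) := fun h =>
    ht' (hR.subset_of_mem (mem_of_mem_erase h) (mem_insert_self t _))
  rw [card_insert_of_notMem hnotMem, card_erase_add_one hDs,
    prod_insert hnotMem, ← mul_prod_erase R _ hDs]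
  congr 2
  · rw [mixedMoment_update_of_mem hsDs]
    refine expect_congr rfl fun ω _ => ?_
    rw [prod_insert htDs, ← mul_prod_erase _ _ hsDs, Pi.mul_apply]
    ring
  · refine prod_congr rfl fun D hD => mixedMoment_update_of_notMem (fun hsD => ?_) ξ _
    exact (mem_erase.mp hD).1 (hR.blockOf_eq (mem_of_mem_erase hD) hsD).symm

lemma sum_cumulant_mul_cumulant (hs : s ∈ A) (ht : t ∈ A)
    (ξ : ι → Ω → ℝ) :
    ∑ J ∈ A.powerset.filter (fun J => s ∈ J ∧ t ∉ J), cumulant J ξ * cumulant (A \ J) ξ =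
      -∑ P ∈ (partitionsOf A).filter (fun P => t ∉ blockOf P s),
        partitionWeight #P * ∏ D ∈ P, mixedMoment D ξ := by
  have key := sum_powerset_sum_partitionsOf A fun J P₁ P₂ => if s ∈ J ∧ t ∉ J then
    (partitionWeight #P₁ * ∏ D ∈ P₁, mixedMoment D ξ) *
      (partitionWeight #P₂ * ∏ D ∈ P₂, mixedMoment D ξ) else 0
  rw [sum_filter]
  convert key using 2 with J _ P hP
  · split_ifs <;> simp [cumulant, sum_mul_sum]
  rw [sum_filter, ← sum_neg_distrib]
  refine sum_congr rfl fun P hP => ?_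
  have hP := mem_partitionsOf.mp hP
  obtain ⟨hDs, hsDs⟩ := hP.blockOf_mem hs
  obtain ⟨hDt, htDt⟩ := hP.blockOf_mem ht
  have hterm : ∀ T ∈ P.powerset, (if s ∈ T.biUnion id ∧ t ∉ T.biUnion id then
      (partitionWeight #T * ∏ D ∈ T, mixedMoment D ξ) *
        (partitionWeight #(P \ T) * ∏ D ∈ P \ T, mixedMoment D ξ) else 0) =
      if blockOf P s ∈ T ∧ blockOf P t ∉ T then
        partitionWeight #T * partitionWeight #(P \ T) * ∏ D ∈ P, mixedMoment D ξ else 0 := by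
    intro T hT
    have hT := mem_powerset.mp hT
    simp only [hP.mem_biUnion_iff hT hs, hP.mem_biUnion_iff hT ht, ← prod_sdiff hT]
    congr 1
    ring
  rw [sum_congr rfl hterm, ← sum_filter, ← sum_mul]
  by_cases htDs : t ∈ blockOf P s
  · rw [if_neg (not_not.mpr htDs), neg_zero, hP.blockOf_eq hDs htDs]
    simp
  · rw [if_pos htDs, sum_powerset_filter_partitionWeight_mul hDs hDt
      fun h => htDs (h ▸ htDt)]
    ring

/-- The case of two variables of the Leonov–Shiryaev formula for cumulants of products. -/
lemma cumulant_eq_cumulant_update_mul_sub (hs : s ∈ A) (ht : t ∈ A)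
    (hst : s ≠ t) (ξ : ι → Ω → ℝ) :
    cumulant A ξ = cumulant (A.erase t) (Function.update ξ s (ξ s * ξ t)) -
      ∑ J ∈ A.powerset.filter (fun J => s ∈ J ∧ t ∉ J), cumulant J ξ * cumulant (A \ J) ξ := by
  rw [cumulant_update_mul hs ht hst, sum_cumulant_mul_cumulant hs ht, sub_neg_eq_add, cumulant,
    sum_filter_add_sum_filter_not]

end Cumulant

section CardImage

lemma card_biUnion_add_card_le {α β : Type*} [DecidableEq α] [DecidableEq β] {𝔅 : Finset α}
    (S : α → Finset β) (h𝔅 : 𝔅.Nonempty)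
    (hconn : ∀ T ⊆ 𝔅, T.Nonempty → T ≠ 𝔅 → ∃ A ∈ 𝔅, A ∉ T ∧ ¬Disjoint (S A) (T.biUnion S)) :
    #(𝔅.biUnion S) + #𝔅 ≤ ∑ A ∈ 𝔅, #(S A) + 1 := by
  have grow : ∀ k, k + 1 ≤ #𝔅 → ∃ T ⊆ 𝔅, #T = k + 1 ∧ #(T.biUnion S) + k ≤ ∑ A ∈ T, #(S A) := by
    intro k
    induction k with
    | zero =>
      obtain ⟨A, hA⟩ := h𝔅
      exact fun _ => ⟨{A}, by simpa using hA, by simp⟩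
    | succ k ih =>
      intro hk
      obtain ⟨T, hT, hTcard, hTsum⟩ := ih (by omega)
      obtain ⟨A, hA, hAT, hmeet⟩ := hconn T hT (card_pos.mp (by omega))
        (fun h => by rw [h] at hTcard; omega)
      refine ⟨insert A T, insert_subset hA hT, by rw [card_insert_of_notMem hAT, hTcard], ?_⟩
      rw [biUnion_insert, sum_insert hAT]
      have := card_union_add_card_inter (S A) (T.biUnion S)
      have := card_pos.mpr (not_disjoint_iff_nonempty_inter.mp hmeet)
      omega
  obtain ⟨T, hT, hTcard, hTsum⟩ := grow (#𝔅 - 1) (by have := h𝔅.card_pos; omega)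
  obtain rfl := eq_of_subset_of_card_le hT (by omega)
  omega

lemma card_image_add_one_le {α β : Type*} [DecidableEq α] [DecidableEq β] {A J : Finset α}
    {v : α → β} {s t : α} (hJ : J ⊆ A) (hs : s ∈ J) (ht : t ∈ A \ J) (hvst : v s = v t) :
    #(A.image v) + 1 ≤ #(J.image v) + #((A \ J).image v) := by
  have hunion : J.image v ∪ (A \ J).image v = A.image v := by
    rw [← image_union, union_sdiff_of_subset hJ]
  have hinter : v s ∈ J.image v ∩ (A \ J).image v :=
    mem_inter.mpr ⟨mem_image_of_mem v hs, hvst ▸ mem_image_of_mem v ht⟩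
  have := card_union_add_card_inter (J.image v) ((A \ J).image v)
  have := card_pos.mpr ⟨_, hinter⟩
  rw [hunion] at *
  omega

end CardImage

section RandomPermutation

variable {ι : Type*} {n : ℕ}

def permEval (f : ι → Fin n → ℝ) (v : ι → Fin n) : ι → Equiv.Perm (Fin n) → ℝ :=
  fun i σ => f i (σ (v i))

lemma permEval_update_index [DecidableEq ι] (f : ι → Fin n → ℝ) (v : ι → Fin n) (s : ι)
    (y : Fin n) :
    permEval f (Function.update v s y) = Function.update (permEval f v) s fun σ => f s (σ y) := by
  funext i σ
  by_cases hi : i = s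
  · subst hi; simp [permEval]
  · simp [permEval, Function.update_of_ne hi]

variable [Fintype ι]

lemma cumulant_permEval_comp (A : Finset ι) (f : ι → Fin n → ℝ) (v : ι → Fin n)
    (τ : Equiv.Perm (Fin n)) : cumulant A (permEval f (τ ∘ v)) = cumulant A (permEval f v) :=
  cumulant_congr fun _ _ _ => Fintype.expect_equiv (Equiv.mulRight τ) _ _ fun _ => rfl

variable [DecidableEq ι]

/-- If the index `v s` is not shared with any other variable, moving it to any other unshared
index leaves the cumulant unchanged; summing over all such moves and using that `∑_y f(σ y)`
is constant turns the cumulant into a sum of cumulants with one distinct index fewer. -/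
lemma card_sub_mul_cumulant_permEval {A : Finset ι} {s : ι} (hs : s ∈ A) (hA : 2 ≤ #A)
    (f : ι → Fin n → ℝ) {v : ι → Fin n} (hv : v s ∉ (A.erase s).image v) :
    ((n - #((A.erase s).image v) : ℕ) : ℝ) * cumulant A (permEval f v) =
      -∑ g ∈ (A.erase s).image v, cumulant A (permEval f (Function.update v s g)) := by
  set W := (A.erase s).image v
  have hmove : ∀ y ∉ W, cumulant A (permEval f (Function.update v s y)) =
      cumulant A (permEval f v) := by
    intro y hy
    rw [← cumulant_permEval_comp A f v (Equiv.swap (v s) y)]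
    refine cumulant_congr_of_eqOn fun i hi => ?_
    by_cases his : i = s
    · rw [his]
      funext σ
      simp [permEval]
    · have hiW : v i ∈ W := mem_image_of_mem v (mem_erase.mpr ⟨his, hi⟩)
      funext σ
      simp only [permEval, Function.update_of_ne his, Function.comp_apply,
        Equiv.swap_apply_of_ne_of_ne (fun h : v i = v s => hv (h ▸ hiW))
          (fun h : v i = y => hy (h ▸ hiW))]
  have hsum : (∑ y ∈ univ \ W, fun σ : Equiv.Perm (Fin n) => f s (σ y)) =
      (fun _ => ∑ q, f s q) + ∑ g ∈ W, -fun σ : Equiv.Perm (Fin n) => f s (σ g) := by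
    funext σ
    simp only [Finset.sum_apply, Pi.add_apply, Pi.neg_apply, sum_neg_distrib,
      sum_sdiff_eq_sub (subset_univ W), Equiv.sum_comp σ (f s)]
    ring
  have h := cumulant_update_sum hs (permEval f v) (univ \ W) fun y σ => f s (σ y)
  rw [hsum, cumulant_update_add hs, cumulant_update_const hs hA, zero_add,
    cumulant_update_sum hs] at h
  simp only [cumulant_update_neg hs, sum_neg_distrib, ← permEval_update_index] at h
  rw [h, sum_congr rfl fun y hy => hmove y (mem_sdiff.mp hy).2, sum_const,
    nsmul_eq_mul, card_sdiff_of_subset (subset_univ W), card_univ,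
    Fintype.card_fin]

/-- The decay bound restricted to `#A + #v(A) ≤ N`, so that it can be proved by induction
on `N`. -/
def PermCumulantBound (ι : Type*) [Fintype ι] (M : ℝ) (N : ℕ) : Prop :=
  ∀ (n : ℕ) (A : Finset ι) (f : ι → Fin n → ℝ) (v : ι → Fin n) (b : ι → ℝ), A.Nonempty →
    (∀ i ∈ A, ∀ q, |f i q| ≤ b i) → #A + #(A.image v) ≤ N →
      |cumulant A (permEval f v)| * n ^ #(A.image v) ≤ M * (∏ i ∈ A, b i) * n

variable {A : Finset ι} {f : ι → Fin n → ℝ} {v : ι → Fin n} {b : ι → ℝ}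

lemma abs_cumulant_permEval_mul_pow_le_of_small {N c : ℕ} (hA : A.Nonempty)
    (hb : ∀ i ∈ A, ∀ q, |f i q| ≤ b i) (hc : 1 ≤ c) (hN : #(A.image v) ≤ N + 1)
    (hsmall : n ≤ c ∨ #(A.image v) = 1) :
    |cumulant A (permEval f v)| * n ^ #(A.image v) ≤
      (Fintype.card (Finset (Finset ι)) * (Fintype.card ι).factorial * c ^ N) *
        (∏ i ∈ A, b i) * n := by
  obtain ⟨a, ha⟩ := hA
  have hb0 : 0 ≤ ∏ i ∈ A, b i := prod_nonneg fun i hi =>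
    (abs_nonneg _).trans (hb i hi (v a))
  have hcum : |cumulant A (permEval f v)| ≤
      Fintype.card (Finset (Finset ι)) * (Fintype.card ι).factorial * ∏ i ∈ A, b i := by
    refine (abs_cumulant_le fun i hi σ => hb i hi (σ (v i))).trans ?_
    gcongr
    · exact_mod_cast card_le_univ _
    · exact card_le_univ A
  obtain ⟨e, he⟩ : ∃ e, #(A.image v) = e + 1 :=
    Nat.exists_eq_add_one.mpr (card_pos.mpr ⟨v a, mem_image_of_mem v ha⟩)
  have hpow : (n : ℝ) ^ #(A.image v) ≤ c ^ N * n := by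
    rw [he, pow_succ]
    gcongr
    rcases hsmall with hn | hd
    · calc (n : ℝ) ^ e ≤ (c : ℝ) ^ e := by gcongr
        _ ≤ (c : ℝ) ^ N := pow_le_pow_right₀ (by exact_mod_cast hc) (by omega)
    · rw [show e = 0 by omega, pow_zero]
      exact one_le_pow₀ (by exact_mod_cast hc)
  calc |cumulant A (permEval f v)| * n ^ #(A.image v)
      ≤ (Fintype.card (Finset (Finset ι)) * (Fintype.card ι).factorial * ∏ i ∈ A, b i) *
          (c ^ N * n) := by gcongr
    _ = _ := by ring

lemma card_sub_mul_abs_cumulant_permEval_mul_pow_le {M : ℝ} {N : ℕ} {s : ι}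
    (ih : PermCumulantBound ι M N) (hb : ∀ i ∈ A, ∀ q, |f i q| ≤ b i) (hs : s ∈ A)
    (hA : 2 ≤ #A) (hv : v s ∉ (A.erase s).image v) (hN : #A + #((A.erase s).image v) ≤ N) :
    ((n - #((A.erase s).image v) : ℕ) : ℝ) * |cumulant A (permEval f v)| *
      n ^ #((A.erase s).image v) ≤ #((A.erase s).image v) * (M * (∏ i ∈ A, b i) * n) := by
  set W := (A.erase s).image v
  have hterm : ∀ g ∈ W,
      |cumulant A (permEval f (Function.update v s g))| * n ^ #W ≤ M * (∏ i ∈ A, b i) * n := by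
    intro g hg
    have hrest : (A.erase s).image (Function.update v s g) = W :=
      image_congr fun i hi => Function.update_of_ne (ne_of_mem_erase hi) g v
    have himage : A.image (Function.update v s g) = W := by
      conv_lhs => rw [← insert_erase hs]
      rw [image_insert, Function.update_self, hrest, insert_eq_of_mem hg]
    have h := ih n A f (Function.update v s g) b ⟨s, hs⟩ hb (himage ▸ hN)
    rwa [himage] at h
  rw [← Nat.abs_cast, ← abs_mul, card_sub_mul_cumulant_permEval hs hA f hv, abs_neg]
  calc |∑ g ∈ W, cumulant A (permEval f (Function.update v s g))| * n ^ #W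
      ≤ ∑ g ∈ W, |cumulant A (permEval f (Function.update v s g))| * n ^ #W := by
        rw [← sum_mul]; gcongr; exact abs_sum_le_sum_abs _ _
    _ ≤ _ := by
        rw [← nsmul_eq_mul, ← sum_const]
        exact sum_le_sum hterm

lemma abs_cumulant_permEval_mul_pow_le_of_notMem {M : ℝ} {N : ℕ} {s : ι}
    (ih : PermCumulantBound ι M N) (hM : 0 ≤ M) (hb : ∀ i ∈ A, ∀ q, |f i q| ≤ b i) (hs : s ∈ A)
    (hA : 2 ≤ #A) (hv : v s ∉ (A.erase s).image v) (hN : #A + #(A.image v) ≤ N + 1)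
    (hn : 2 * N ≤ n) :
    |cumulant A (permEval f v)| * n ^ #(A.image v) ≤ 2 * N * M * (∏ i ∈ A, b i) * n := by
  set W := (A.erase s).image v
  have hd : #(A.image v) = #W + 1 := by
    conv_lhs => rw [← insert_erase hs]
    rw [image_insert, card_insert_of_notMem hv]
  have hAW : #A + #W ≤ N := by omega
  have hb0 : 0 ≤ ∏ i ∈ A, b i := prod_nonneg fun i hi => (abs_nonneg _).trans (hb i hi (v s))
  have hWN : (#W : ℝ) ≤ N := by exact_mod_cast (show #W ≤ N by omega)
  have hhalf : (n : ℝ) ≤ 2 * ((n - #W : ℕ) : ℝ) := by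
    rw [Nat.cast_sub (by omega)]
    have : (2 * N : ℝ) ≤ n := by exact_mod_cast hn
    linarith
  calc |cumulant A (permEval f v)| * n ^ #(A.image v)
      = |cumulant A (permEval f v)| * n ^ #W * n := by rw [hd, pow_succ, mul_assoc]
    _ ≤ |cumulant A (permEval f v)| * n ^ #W * (2 * ((n - #W : ℕ) : ℝ)) := by gcongr
    _ = 2 * (((n - #W : ℕ) : ℝ) * |cumulant A (permEval f v)| * n ^ #W) := by ring
    _ ≤ 2 * (#W * (M * (∏ i ∈ A, b i) * n)) := mul_le_mul_of_nonneg_left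
        (card_sub_mul_abs_cumulant_permEval_mul_pow_le ih hb hs hA hv hAW) zero_le_two
    _ ≤ 2 * (N * (M * (∏ i ∈ A, b i) * n)) := by gcongr
    _ = 2 * N * M * (∏ i ∈ A, b i) * n := by ring

lemma abs_cumulant_update_mul_permEval_mul_pow_le {M : ℝ} {N : ℕ} {s t : ι}
    (ih : PermCumulantBound ι M N) (hb : ∀ i ∈ A, ∀ q, |f i q| ≤ b i) (hs : s ∈ A) (ht : t ∈ A)
    (hst : s ≠ t) (hvst : v s = v t) (hN : #A + #(A.image v) ≤ N + 1) :
    |cumulant (A.erase t) (Function.update (permEval f v) s (permEval f v s * permEval f v t))| *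
      n ^ #(A.image v) ≤ M * (∏ i ∈ A, b i) * n := by
  have hsA : s ∈ A.erase t := mem_erase.mpr ⟨hst, hs⟩
  have hfamily : Function.update (permEval f v) s (permEval f v s * permEval f v t) =
      permEval (Function.update f s (f s * f t)) v := by
    funext i σ
    by_cases hi : i = s
    · subst hi; simp [permEval, hvst]
    · simp [permEval, Function.update_of_ne hi]
  have himage : (A.erase t).image v = A.image v := by
    refine (image_subset_image (erase_subset t A)).antisymm fun x hx => ?_
    obtain ⟨i, hi, rfl⟩ := mem_image.mp hx
    by_cases hit : i = t
    · exact mem_image.mpr ⟨s, hsA, hit ▸ hvst⟩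
    · exact mem_image_of_mem v (mem_erase.mpr ⟨hit, hi⟩)
  have hprod : ∏ i ∈ A.erase t, Function.update b s (b s * b t) i = ∏ i ∈ A, b i := by
    rw [← mul_prod_erase _ _ hsA, Function.update_self, ← mul_prod_erase A b ht,
      ← mul_prod_erase (A.erase t) b hsA, prod_congr rfl fun i hi =>
        Function.update_of_ne (ne_of_mem_erase hi) _ b]
    ring
  have hbound : ∀ i ∈ A.erase t, ∀ q,
      |Function.update f s (f s * f t) i q| ≤ Function.update b s (b s * b t) i := by
    intro i hi q
    by_cases his : i = s
    · subst his
      simp only [Function.update_self, Pi.mul_apply, abs_mul]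
      exact mul_le_mul (hb i hs q) (hb t ht q) (abs_nonneg _) ((abs_nonneg _).trans (hb i hs q))
    · simpa [Function.update_of_ne his] using hb i (mem_of_mem_erase hi) q
  have hA := card_pos.mpr ⟨s, hs⟩
  have h := ih n (A.erase t) _ v _ ⟨s, hsA⟩ hbound
    (by rw [himage, card_erase_of_mem ht]; omega)
  rwa [himage, hprod, ← hfamily] at h

lemma abs_cumulant_mul_cumulant_permEval_mul_pow_le {M : ℝ} {N : ℕ} {s t : ι} {J : Finset ι}
    (ih : PermCumulantBound ι M N) (hb : ∀ i ∈ A, ∀ q, |f i q| ≤ b i) (hJ : J ⊆ A) (hsJ : s ∈ J)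
    (ht : t ∈ A) (htJ : t ∉ J) (hvst : v s = v t) (hN : #A + #(A.image v) ≤ N + 1) :
    |cumulant J (permEval f v) * cumulant (A \ J) (permEval f v)| * n ^ #(A.image v) ≤
      M ^ 2 * (∏ i ∈ A, b i) * n := by
  have htJ' : t ∈ A \ J := mem_sdiff.mpr ⟨ht, htJ⟩
  have hcard := card_image_add_one_le hJ hsJ htJ' hvst
  have hJ₁ := ih n J f v b ⟨s, hsJ⟩ (fun i hi => hb i (hJ hi)) (by
    have := card_lt_card (hJ.ssubset_of_ne fun h => htJ (h ▸ ht))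
    have := card_le_card (image_subset_image (f := v) hJ)
    omega)
  have hJ₂ := ih n (A \ J) f v b ⟨t, htJ'⟩ (fun i hi => hb i (sdiff_subset hi)) (by
    have := card_sdiff_of_subset hJ
    have := card_pos.mpr ⟨s, hsJ⟩
    have := card_le_card hJ
    have := card_le_card (image_subset_image (f := v) (sdiff_subset (s := A)
      (t := J)))
    omega)
  have hn : (1 : ℝ) ≤ n := by exact_mod_cast Fin.pos (v s)
  have hb₀ : ∀ i ∈ A, 0 ≤ b i := fun i hi => (abs_nonneg _).trans (hb i hi (v s))
  have hprod : (∏ i ∈ J, b i) * ∏ i ∈ A \ J, b i = ∏ i ∈ A, b i := by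
    rw [mul_comm]; exact prod_sdiff hJ
  refine le_of_mul_le_mul_right ?_ (by positivity : (0 : ℝ) < n)
  calc |cumulant J (permEval f v) * cumulant (A \ J) (permEval f v)| * n ^ #(A.image v) * n
      = |cumulant J (permEval f v) * cumulant (A \ J) (permEval f v)| *
          n ^ (#(A.image v) + 1) := by ring
    _ ≤ |cumulant J (permEval f v) * cumulant (A \ J) (permEval f v)| *
          n ^ (#(J.image v) + #((A \ J).image v)) := by gcongr
    _ = (|cumulant J (permEval f v)| * n ^ #(J.image v)) *
          (|cumulant (A \ J) (permEval f v)| * n ^ #((A \ J).image v)) := by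
          rw [abs_mul, pow_add]; ring
    _ ≤ (M * (∏ i ∈ J, b i) * n) * (M * (∏ i ∈ A \ J, b i) * n) :=
          mul_le_mul hJ₁ hJ₂ (by positivity) ((mul_nonneg (abs_nonneg _) (by positivity)).trans hJ₁)
    _ = M ^ 2 * (∏ i ∈ A, b i) * n * n := by rw [← hprod]; ring

lemma abs_cumulant_permEval_mul_pow_le_of_eq {M : ℝ} {N : ℕ} {s t : ι}
    (ih : PermCumulantBound ι M N) (hb : ∀ i ∈ A, ∀ q, |f i q| ≤ b i) (hs : s ∈ A) (ht : t ∈ A)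
    (hst : s ≠ t) (hvst : v s = v t) (hN : #A + #(A.image v) ≤ N + 1) :
    |cumulant A (permEval f v)| * n ^ #(A.image v) ≤ (M + 2 ^ N * M ^ 2) * (∏ i ∈ A, b i) * n := by
  have hsplit : ∀ J ∈ A.powerset.filter (fun J => s ∈ J ∧ t ∉ J),
      |cumulant J (permEval f v) * cumulant (A \ J) (permEval f v)| * n ^ #(A.image v) ≤
        M ^ 2 * (∏ i ∈ A, b i) * n := fun J hJ => by
    simp only [mem_filter, mem_powerset] at hJ
    exact abs_cumulant_mul_cumulant_permEval_mul_pow_le ih hb hJ.1 hJ.2.1 ht hJ.2.2 hvst hN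
  have hcount : (#(A.powerset.filter fun J => s ∈ J ∧ t ∉ J) : ℝ) ≤ 2 ^ N := by
    have h₁ := card_filter_le A.powerset fun J => s ∈ J ∧ t ∉ J
    have h₂ : #A ≤ N := by
      have := card_pos.mpr ⟨v s, mem_image_of_mem v hs⟩
      omega
    rw [card_powerset] at h₁
    exact_mod_cast h₁.trans (Nat.pow_le_pow_right two_pos h₂)
  have hb₀ : 0 ≤ (∏ i ∈ A, b i) * n := mul_nonneg
    (prod_nonneg fun i hi => (abs_nonneg _).trans (hb i hi (v s))) n.cast_nonneg
  rw [cumulant_eq_cumulant_update_mul_sub hs ht hst]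
  calc _ ≤ |cumulant (A.erase t) (Function.update (permEval f v) s
          (permEval f v s * permEval f v t))| * n ^ #(A.image v) +
        ∑ J ∈ A.powerset.filter (fun J => s ∈ J ∧ t ∉ J),
          |cumulant J (permEval f v) * cumulant (A \ J) (permEval f v)| * n ^ #(A.image v) := by
        rw [← sum_mul, ← add_mul]
        gcongr
        exact (abs_sub _ _).trans (add_le_add le_rfl (abs_sum_le_sum_abs _ _))
    _ ≤ M * (∏ i ∈ A, b i) * n + 2 ^ N * (M ^ 2 * (∏ i ∈ A, b i) * n) := by
        refine add_le_add (abs_cumulant_update_mul_permEval_mul_pow_le ih hb hs ht hst hvst hN)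
          ((sum_le_sum hsplit).trans ?_)
        rw [sum_const, nsmul_eq_mul]
        exact mul_le_mul_of_nonneg_right hcount (mul_nonneg (sq_nonneg M) hb₀ |>.trans_eq
          (mul_assoc _ _ _).symm)
    _ = (M + 2 ^ N * M ^ 2) * (∏ i ∈ A, b i) * n := by ring

lemma PermCumulantBound.succ {M : ℝ} {N : ℕ} (ih : PermCumulantBound ι M N) (hM : 0 ≤ M) :
    PermCumulantBound ι (Fintype.card (Finset (Finset ι)) * (Fintype.card ι).factorial *
      (2 * N + 1) ^ N + 2 * N * M + (M + 2 ^ N * M ^ 2)) (N + 1) := by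
  intro n A f v b hA hb hN
  obtain ⟨a, ha⟩ := hA
  have hX : 0 ≤ (∏ i ∈ A, b i) * n := mul_nonneg
    (prod_nonneg fun i hi => (abs_nonneg _).trans (hb i hi (v a))) n.cast_nonneg
  have hK : (0 : ℝ) ≤ Fintype.card (Finset (Finset ι)) * (Fintype.card ι).factorial *
      (2 * N + 1) ^ N := by positivity
  have hM₁ : 0 ≤ 2 * (N : ℝ) * M := by positivity
  have hM₂ : 0 ≤ 2 ^ N * M ^ 2 := by positivity
  have hdA : #(A.image v) ≤ #A := card_image_le
  have hd : 1 ≤ #(A.image v) := card_pos.mpr ⟨v a, mem_image_of_mem v ha⟩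
  by_cases hsmall : n ≤ 2 * N + 1 ∨ #(A.image v) = 1
  · refine (abs_cumulant_permEval_mul_pow_le_of_small (N := N) ⟨a, ha⟩ hb (by omega) (by omega)
      hsmall).trans ?_
    rw [mul_assoc, mul_assoc _ (∏ i ∈ A, b i)]
    push_cast
    exact mul_le_mul_of_nonneg_right (by linarith) hX
  push Not at hsmall
  by_cases hunique : ∃ s ∈ A, v s ∉ (A.erase s).image v
  · obtain ⟨s, hs, hv⟩ := hunique
    refine (abs_cumulant_permEval_mul_pow_le_of_notMem ih hM hb hs (by omega) hv hN
      (by omega)).trans ?_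
    rw [mul_assoc, mul_assoc _ (∏ i ∈ A, b i)]
    exact mul_le_mul_of_nonneg_right (by linarith) hX
  · push Not at hunique
    obtain ⟨t, ht, hvt⟩ := mem_image.mp (hunique a ha)
    refine (abs_cumulant_permEval_mul_pow_le_of_eq ih hb ha (mem_of_mem_erase ht)
      (ne_of_mem_erase ht).symm hvt.symm hN).trans ?_
    rw [mul_assoc, mul_assoc _ (∏ i ∈ A, b i)]
    exact mul_le_mul_of_nonneg_right (by linarith) hX

lemma exists_permCumulantBound (N : ℕ) : ∃ M, 0 ≤ M ∧ PermCumulantBound ι M N := by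
  induction N with
  | zero => exact ⟨0, le_rfl, fun n A f v b hA _ hN => by
      have := card_pos.mpr hA
      omega⟩
  | succ N ih =>
    obtain ⟨M, hM, hbound⟩ := ih
    exact ⟨_, by positivity, hbound.succ hM⟩

theorem exists_abs_cumulant_permEval_le : ∃ M : ℝ, 0 ≤ M ∧ ∀ (n : ℕ) (A : Finset ι)
    (f : ι → Fin n → ℝ) (v : ι → Fin n) (b : ι → ℝ), A.Nonempty →
    (∀ i ∈ A, ∀ q, |f i q| ≤ b i) →
      |cumulant A (permEval f v)| * n ^ #(A.image v) ≤ M * (∏ i ∈ A, b i) * n := by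
  obtain ⟨M, hM₀, hM⟩ := exists_permCumulantBound (ι := ι) (2 * Fintype.card ι)
  refine ⟨M, hM₀, fun n A f v b hA hb => hM n A f v b hA hb ?_⟩
  have := card_le_univ A
  have : #(A.image v) ≤ #A := card_image_le
  omega

end RandomPermutation


section JoinBlocks

variable {ι : Type*} [Fintype ι] {P Q : Finset (Finset ι)} {B : Finset ι}

lemma IsSetPartition.isPartitionOf_univ (hP : IsSetPartition P) : IsPartitionOf univ P :=
  ⟨fun D hD => ⟨hP.1 D hD, subset_univ D⟩, fun a _ => by
    obtain ⟨D, ⟨hD, haD⟩, huniq⟩ := hP.2 a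
    exact ⟨D, hD, haD, fun E hE haE => huniq E ⟨hE, haE⟩⟩⟩

lemma IsJoinBlock.mem_of_mem (hB : IsJoinBlock P Q B) {x y : ι} (hx : x ∈ B)
    (hxy : (∃ A ∈ P, x ∈ A ∧ y ∈ A) ∨ (∃ A ∈ Q, x ∈ A ∧ y ∈ A)) : y ∈ B := by
  obtain ⟨a, rfl⟩ := hB
  simp only [mem_filter, mem_univ, true_and] at hx ⊢
  exact hx.trans _ _ _ (.rel _ _ hxy)

lemma IsJoinBlock.subset_of_closed (hB : IsJoinBlock P Q B) {U : Finset ι}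
    (hU : ∀ u w, (∃ A ∈ P, u ∈ A ∧ w ∈ A) ∨ (∃ A ∈ Q, u ∈ A ∧ w ∈ A) → u ∈ U → w ∈ U)
    {x : ι} (hxB : x ∈ B) (hxU : x ∈ U) : B ⊆ U := by
  have hclosed : ∀ u w, joinRel P Q u w → (u ∈ U ↔ w ∈ U) := by
    intro u w h
    induction h with
    | rel u w h =>
      refine ⟨hU u w h, hU w u ?_⟩
      rcases h with ⟨A, hA, hu, hw⟩ | ⟨A, hA, hu, hw⟩
      exacts [.inl ⟨A, hA, hw, hu⟩, .inr ⟨A, hA, hw, hu⟩]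
    | refl => exact Iff.rfl
    | symm _ _ _ ih => exact ih.symm
    | trans _ _ _ _ _ ih₁ ih₂ => exact ih₁.trans ih₂
  obtain ⟨a, rfl⟩ := hB
  intro y hy
  simp only [mem_filter, mem_univ, true_and] at hxB hy
  exact (hclosed x y (hxB.symm.trans _ _ _ hy)).mp hxU

variable [DecidableEq ι] {κ : Type*} [DecidableEq κ] {j : ι → κ}

lemma IsJoinBlock.exists_mem_filter (hP : IsSetPartition P) (hB : IsJoinBlock P Q B) {x : ι}
    (hx : x ∈ B) : ∃ A ∈ P.filter (· ⊆ B), x ∈ A := by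
  obtain ⟨A, hA, hxA⟩ := hP.isPartitionOf_univ.exists_mem (mem_univ x)
  exact ⟨A, mem_filter.mpr ⟨hA, fun y hy => hB.mem_of_mem hx (.inl ⟨A, hA, hxA, hy⟩)⟩, hxA⟩

/-- If no further block of `P` inside `B` met the values of `j` on the blocks in `T`, the union
of `T` would be closed under both `P` and `Q`, hence all of `B`. -/
lemma IsJoinBlock.exists_not_disjoint_image (hP : IsSetPartition P) (hB : IsJoinBlock P Q B)
    (hj : ∀ x ∈ B, ∀ y ∈ B, (∃ A ∈ Q, x ∈ A ∧ y ∈ A) → j x = j y)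
    {T : Finset (Finset ι)} (hT : T ⊆ P.filter (· ⊆ B)) (hTne : T.Nonempty)
    (hT𝔅 : T ≠ P.filter (· ⊆ B)) :
    ∃ A ∈ P.filter (· ⊆ B), A ∉ T ∧ ¬Disjoint (A.image j) (T.biUnion (·.image j)) := by
  by_contra! hcon
  have hpart := hP.isPartitionOf_univ
  have hTB : T.biUnion id ⊆ B := biUnion_subset.mpr fun A hA => (mem_filter.mp (hT hA)).2
  have hclosed : ∀ u w, (∃ A ∈ P, u ∈ A ∧ w ∈ A) ∨ (∃ A ∈ Q, u ∈ A ∧ w ∈ A) →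
      u ∈ T.biUnion id → w ∈ T.biUnion id := by
    intro u w huw hu
    obtain ⟨A', hA', huA'⟩ := mem_biUnion.mp hu
    rcases huw with ⟨A, hA, huA, hwA⟩ | ⟨A, hA, huA, hwA⟩
    · exact mem_biUnion.mpr ⟨A', hA',
        hpart.eq_of_mem_of_mem hA (mem_filter.mp (hT hA')).1 huA huA' ▸ hwA⟩
    · have hwB := hB.mem_of_mem (hTB hu) (.inr ⟨A, hA, huA, hwA⟩)
      obtain ⟨Aw, hAw, hwAw⟩ := hB.exists_mem_filter hP hwB
      by_cases hAwT : Aw ∈ T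
      · exact mem_biUnion.mpr ⟨Aw, hAwT, hwAw⟩
      · refine (disjoint_left.mp (hcon Aw hAw hAwT) (mem_image_of_mem j hwAw)
          (mem_biUnion.mpr ⟨A', hA', ?_⟩)).elim
        rw [hj w hwB u (hTB hu) ⟨A, hA, hwA, huA⟩]
        exact mem_image_of_mem j huA'
  obtain ⟨A₀, hA₀⟩ := hTne
  obtain ⟨x, hx⟩ := hpart.nonempty_of_mem (mem_filter.mp (hT hA₀)).1
  have hxU : x ∈ T.biUnion id := mem_biUnion.mpr ⟨A₀, hA₀, hx⟩
  have hBU := hB.subset_of_closed hclosed (hTB hxU) hxU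
  obtain ⟨A, hA, hAT⟩ := exists_of_ssubset (hT.ssubset_of_ne hT𝔅)
  obtain ⟨y, hy⟩ := hpart.nonempty_of_mem (mem_filter.mp hA).1
  obtain ⟨A', hA', hyA'⟩ := mem_biUnion.mp (hBU ((mem_filter.mp hA).2 hy))
  exact hAT (hpart.eq_of_mem_of_mem (mem_filter.mp hA).1 (mem_filter.mp (hT hA')).1
    hy hyA' ▸ hA')

lemma IsJoinBlock.card_image_add_card_le (hP : IsSetPartition P) (hB : IsJoinBlock P Q B)
    (hj : ∀ x ∈ B, ∀ y ∈ B, (∃ A ∈ Q, x ∈ A ∧ y ∈ A) → j x = j y)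
    (hne : (P.filter (· ⊆ B)).Nonempty) :
    #(B.image j) + #(P.filter (· ⊆ B)) ≤ ∑ A ∈ P.filter (· ⊆ B), #(A.image j) + 1 := by
  have hunion : (P.filter (· ⊆ B)).biUnion (·.image j) = B.image j := by
    rw [show ((P.filter (· ⊆ B)).biUnion fun A => A.image j) =
      ((P.filter (· ⊆ B)).biUnion id).image j from biUnion_image.symm]
    congr 1
    refine (biUnion_subset.mpr fun A hA => (mem_filter.mp hA).2).antisymm fun x hx => ?_
    obtain ⟨A, hA, hxA⟩ := hB.exists_mem_filter hP hx
    exact mem_biUnion.mpr ⟨A, hA, hxA⟩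
  rw [← hunion]
  exact card_biUnion_add_card_le _ hne fun T hT hTne hT𝔅 =>
    hB.exists_not_disjoint_image hP hj hT hTne hT𝔅

end JoinBlocks

section Counting

variable {κ : Type*} [Fintype κ] [DecidableEq κ]

lemma card_filter_image_eq_le {α : Type*} [Fintype α] [DecidableEq α] (V : Finset α) :
    #(univ.filter fun j : κ → α => univ.image j = V) ≤
      if #V ≤ Fintype.card κ then Fintype.card κ ^ Fintype.card κ else 0 := by
  split_ifs with hV
  · refine (card_le_card (t := Fintype.piFinset fun _ : κ => V) fun j hj =>
      Fintype.mem_piFinset.mpr fun a => ?_).trans ?_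
    · exact (mem_filter.mp hj).2 ▸ mem_image_of_mem j (mem_univ a)
    · rw [Fintype.card_piFinset, prod_const, card_univ]
      exact Nat.pow_le_pow_left hV _
  · refine (card_eq_zero.mpr (filter_eq_empty_iff.mpr fun j _ h => hV ?_)).le
    exact h ▸ card_image_le.trans card_univ.le

lemma sum_inv_pow_card_image_le (n : ℕ) :
    ∑ j : κ → Fin n, ((n : ℝ) ^ #(univ.image j))⁻¹ ≤
      (Fintype.card κ + 1) * Fintype.card κ ^ Fintype.card κ := by
  set β := Fintype.card κ
  rw [← sum_fiberwise_of_maps_to (g := fun j => univ.image j)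
    (t := (univ : Finset (Fin n)).powerset) fun j _ => mem_powerset.mpr
      (subset_univ _)]
  calc ∑ V ∈ (univ : Finset (Fin n)).powerset,
        ∑ j ∈ univ.filter (fun j : κ → Fin n => univ.image j = V),
          ((n : ℝ) ^ #(univ.image j))⁻¹
      ≤ ∑ V ∈ (univ : Finset (Fin n)).powerset,
          ((if #V ≤ β then (β ^ β : ℕ) else 0 : ℕ) : ℝ) * ((n : ℝ) ^ #V)⁻¹ := by
        refine sum_le_sum fun V _ => ?_
        rw [sum_congr rfl fun j hj => by rw [(mem_filter.mp hj).2],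
          sum_const, nsmul_eq_mul]
        gcongr
        exact_mod_cast card_filter_image_eq_le V
    _ = ∑ q ∈ range (n + 1), (n.choose q : ℝ) *
          (((if q ≤ β then (β ^ β : ℕ) else 0 : ℕ) : ℝ) * ((n : ℝ) ^ q)⁻¹) := by
        rw [sum_powerset_apply_card (fun q => ((if q ≤ β then (β ^ β : ℕ) else 0 : ℕ) : ℝ) *
          ((n : ℝ) ^ q)⁻¹), card_univ, Fintype.card_fin]
        simp only [nsmul_eq_mul]
    _ ≤ ∑ q ∈ range (n + 1), if q ≤ β then (β ^ β : ℝ) else 0 := by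
        refine sum_le_sum fun q _ => ?_
        split_ifs
        · have : (n.choose q : ℝ) * ((n : ℝ) ^ q)⁻¹ ≤ 1 := div_le_one_of_le₀
            (by exact_mod_cast Nat.choose_le_pow n q) (by positivity)
          push_cast
          nlinarith [pow_nonneg (Nat.cast_nonneg β : (0 : ℝ) ≤ β) β]
        · simp
    _ = #((range (n + 1)).filter (· ≤ β)) * (β ^ β : ℝ) := by
        rw [← sum_filter, sum_const, nsmul_eq_mul]
    _ ≤ (β + 1) * β ^ β := by
        gcongr
        exact_mod_cast (card_le_card fun q hq => mem_range.mpr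
          (Nat.lt_succ_of_le (mem_filter.mp hq).2)).trans (card_range _).le

lemma prod_mul_pow_le_of_add_card_le {α : Type*} {s : Finset α} {x : α → ℝ} {d : α → ℕ}
    {D n : ℕ} {M : ℝ} (hn : 1 ≤ n) (hs : s.Nonempty) (hx : ∀ a ∈ s, 0 ≤ x a)
    (hxd : ∀ a ∈ s, x a * n ^ d a ≤ M * n) (hD : D + #s ≤ ∑ a ∈ s, d a + 1) :
    (∏ a ∈ s, x a) * n ^ D ≤ M ^ #s * n := by
  have hn' : (1 : ℝ) ≤ n := by exact_mod_cast hn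
  have hm := hs.card_pos
  refine le_of_mul_le_mul_right ?_ (pow_pos (by positivity : (0 : ℝ) < n) (#s - 1))
  calc (∏ a ∈ s, x a) * n ^ D * n ^ (#s - 1)
      ≤ (∏ a ∈ s, x a) * n ^ ∑ a ∈ s, d a := by
        rw [mul_assoc, ← pow_add]
        gcongr
        · exact prod_nonneg hx
        · omega
    _ = ∏ a ∈ s, (x a * n ^ d a) := by rw [prod_mul_distrib, prod_pow_eq_pow_sum]
    _ ≤ ∏ _a ∈ s, M * n := prod_le_prod (fun a ha => by have := hx a ha; positivity) hxd
    _ = M ^ #s * n * n ^ (#s - 1) := by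
        rw [prod_const, mul_pow, mul_assoc, ← pow_succ', Nat.sub_add_cancel hm]

end Counting

section Spearman

/-- `Z_i = normalizedRank n (σ i)`. -/
def normalizedRank (n : ℕ) (q : Fin n) : ℝ :=
  Real.sqrt (12 / ((n : ℝ) ^ 2 - 1)) * (((q : ℕ) : ℝ) + 1 - ((n : ℝ) + 1) / 2)

lemma abs_normalizedRank_le {n : ℕ} (q : Fin n) : |normalizedRank n q| ≤ 2 := by
  have hq : ((q : ℕ) : ℝ) + 1 ≤ n := by exact_mod_cast q.isLt
  have hq₀ : (0 : ℝ) ≤ (q : ℕ) := Nat.cast_nonneg _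
  have hsq : (((q : ℕ) : ℝ) + 1 - ((n : ℝ) + 1) / 2) ^ 2 * (12 / ((n : ℝ) ^ 2 - 1)) ≤ 4 := by
    rcases eq_or_lt_of_le (show (1 : ℝ) ≤ n by linarith) with hn | hn
    · rw [← hn]; norm_num
    · rw [mul_div_assoc', div_le_iff₀ (by nlinarith)]
      nlinarith
  rw [normalizedRank, abs_mul, abs_of_nonneg (Real.sqrt_nonneg _), ← Real.sqrt_sq_eq_abs,
    ← Real.sqrt_mul' _ (sq_nonneg _), show (2 : ℝ) = Real.sqrt 4 by
      rw [show (4 : ℝ) = 2 ^ 2 by norm_num, Real.sqrt_sq zero_le_two]]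
  exact Real.sqrt_le_sqrt (by linarith)

instance (n : ℕ) : MeasurableSingletonClass (Equiv.Perm (Fin n)) :=
  ⟨fun _ => MeasurableSpace.measurableSet_top⟩

variable {ι : Type*} [Fintype ι] [DecidableEq ι]

lemma jointCumulant_Zr_eq_cumulant {n : ℕ} {A B : Finset ι} (hAB : A ⊆ B)
    {j : {x // x ∈ B} → Fin n} {jv : ι → Fin n} (hjv : ∀ a : {x // x ∈ B}, jv a = j a) :
    jointCumulant (permMeasure n) (fun a : {x // x ∈ A} => Zr n (j ⟨a.1, hAB a.2⟩)) =
      cumulant A (permEval (fun _ => normalizedRank n) jv) := by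
  rw [← jointCumulant_uniformOfFintype]
  congr 1
  funext a σ
  rw [← hjv]
  rfl

variable {π π₁ : Finset (Finset ι)} {B : Finset ι}

lemma exists_prod_abs_jointCumulant_mul_pow_le (hπ : IsSetPartition π) (hB : IsJoinBlock π π₁ B)
    (hne : (π.filter (· ⊆ B)).Nonempty) :
    ∃ C : ℝ, 0 ≤ C ∧ ∀ n : ℕ, 0 < n → ∀ j : {x // x ∈ B} → Fin n,
      (∀ a b : {x // x ∈ B}, (∃ A ∈ π₁, a.1 ∈ A ∧ b.1 ∈ A) → j a = j b) →
      (∏ A ∈ (π.filter fun A => A ⊆ B).attach,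
        |jointCumulant (permMeasure n)
          (fun a : {x // x ∈ A.1} => Zr n (j ⟨a.1, (mem_filter.mp A.2).2 a.2⟩))|) *
        n ^ #(univ.image j) ≤ C * n := by
  obtain ⟨M, hM₀, hM⟩ := exists_abs_cumulant_permEval_le (ι := ι)
  refine ⟨(M * 2 ^ Fintype.card ι) ^ #(π.filter (· ⊆ B)), by positivity, fun n hn j hj => ?_⟩
  set jv : ι → Fin n := Function.extend Subtype.val j fun _ => ⟨0, hn⟩
  have hjv : ∀ a : {x // x ∈ B}, jv a = j a := Subtype.val_injective.extend_apply j _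
  have himage : univ.image j = B.image jv := by
    ext q
    simp only [mem_image, mem_univ, true_and]
    exact ⟨fun ⟨a, ha⟩ => ⟨a, a.2, (hjv a).trans ha⟩, fun ⟨x, hx, hxq⟩ =>
      ⟨⟨x, hx⟩, (hjv ⟨x, hx⟩).symm.trans hxq⟩⟩
  rw [prod_congr rfl fun A _ => by rw [jointCumulant_Zr_eq_cumulant _ hjv],
    prod_attach (π.filter (· ⊆ B)) fun A => |cumulant A (permEval (fun _ => normalizedRank n) jv)|,
    himage]
  refine prod_mul_pow_le_of_add_card_le hn hne (fun _ _ => abs_nonneg _) (fun A hA => ?_)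
    (hB.card_image_add_card_le hπ (fun x hx y hy hxy => ?_) hne)
  · refine (hM n A _ jv (fun _ => 2) (hπ.1 A (mem_filter.mp hA).1)
      fun _ _ q => abs_normalizedRank_le q).trans ?_
    rw [prod_const]
    gcongr
    · exact one_le_two
    · exact card_le_univ A
  · exact (hjv ⟨x, hx⟩).trans ((hj ⟨x, hx⟩ ⟨y, hy⟩ hxy).trans (hjv ⟨y, hy⟩).symm)

theorem exists_sum_prod_abs_jointCumulant_le (hπ : IsSetPartition π) (hB : IsJoinBlock π π₁ B)
    (hne : (π.filter (· ⊆ B)).Nonempty) :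
    ∃ C : ℝ, 0 ≤ C ∧ ∀ n : ℕ,
      (∑ j ∈ univ.filter
          (fun j : {x // x ∈ B} → Fin n =>
            ∀ a b : {x // x ∈ B}, (∃ A ∈ π₁, a.1 ∈ A ∧ b.1 ∈ A) → j a = j b),
        ∏ A ∈ (π.filter fun A => A ⊆ B).attach,
          |jointCumulant (permMeasure n)
            (fun a : {x // x ∈ A.1} =>
              Zr n (j ⟨a.1, (mem_filter.mp A.2).2 a.2⟩))|) ≤ C * n := by
  obtain ⟨C, hC₀, hC⟩ := exists_prod_abs_jointCumulant_mul_pow_le hπ hB hne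
  refine ⟨C * ((#B + 1) * #B ^ #B), by positivity, fun n => ?_⟩
  rcases Nat.eq_zero_or_pos n with rfl | hn
  · obtain ⟨A, hA⟩ := hne
    obtain ⟨x, hx⟩ := hπ.1 A (mem_filter.mp hA).1
    have : IsEmpty ({x // x ∈ B} → Fin 0) :=
      ⟨fun j => (j ⟨x, (mem_filter.mp hA).2 hx⟩).elim0⟩
    simp
  have hcount := sum_inv_pow_card_image_le (κ := {x // x ∈ B}) n
  rw [Fintype.card_coe] at hcount
  calc _ ≤ ∑ j : {x // x ∈ B} → Fin n, C * n * ((n : ℝ) ^ #(univ.image j))⁻¹ := by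
        refine (sum_le_sum fun j hj => ?_).trans
          (sum_le_sum_of_subset_of_nonneg (filter_subset _ _) fun _ _ _ => by positivity)
        rw [le_mul_inv_iff₀ (by positivity)]
        exact hC n hn j (mem_filter.mp hj).2
    _ ≤ C * n * ((#B + 1) * #B ^ #B) := by
        rw [← mul_sum]
        exact mul_le_mul_of_nonneg_left hcount (by positivity)
    _ = C * ((#B + 1) * #B ^ #B) * n := by ring

end Spearman

theorem spearman_block_sum_bound_special_general (k : ℕ)
    (π π₁ : Finset (Finset (Fin (2 * k))))
    (hπ : IsSetPartition π)
    (B : Finset (Fin (2 * k))) (hB : IsJoinBlock π π₁ B)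
    (hone : (π.filter fun A => A ⊆ B ∧ 3 ≤ A.card / 2).card = 1) :
    ∃ C : ℝ, ∀ n : ℕ,
      (∑ j ∈ Finset.univ.filter
          (fun j : {x // x ∈ B} → Fin n =>
            ∀ a b : {x // x ∈ B}, (∃ A ∈ π₁, a.1 ∈ A ∧ b.1 ∈ A) → j a = j b),
        ∏ A ∈ (π.filter fun A => A ⊆ B).attach,
          |jointCumulant (permMeasure n)
            (fun a : {x // x ∈ A.1} =>
              Zr n (j ⟨a.1, (Finset.mem_filter.mp A.2).2 a.2⟩))|) ≤
      C * (n : ℝ) ^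
        (∑ A ∈ π.filter (fun A => A ⊆ B),
          (if 2 ≤ A.card / 2 then A.card / 2 - 2 else 0)) := by
  obtain ⟨A₀, hA₀⟩ := card_eq_one.mp hone
  obtain ⟨hA₀π, hA₀B, hA₀⟩ := mem_filter.mp (hA₀ ▸ mem_singleton_self A₀)
  have hA₀mem : A₀ ∈ π.filter (· ⊆ B) := mem_filter.mpr ⟨hA₀π, hA₀B⟩
  have hexp : (∑ A ∈ π.filter (fun A => A ⊆ B),
      (if 2 ≤ A.card / 2 then A.card / 2 - 2 else 0)) ≠ 0 := by
    refine Nat.pos_iff_ne_zero.mp (lt_of_lt_of_le ?_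
      (single_le_sum (fun _ _ => Nat.zero_le _) hA₀mem))
    rw [if_pos (by omega)]
    omega
  obtain ⟨C, hC₀, hC⟩ := exists_sum_prod_abs_jointCumulant_le hπ hB ⟨A₀, hA₀mem⟩
  refine ⟨C, fun n => (hC n).trans (mul_le_mul_of_nonneg_left ?_ hC₀)⟩
  exact_mod_cast Nat.le_self_pow hexp n

/-- Proposition 4.7 (special case): with the notation of Proposition 4.2, if exactly one
block `A` of `π` contained in `B` has `𝔞(A) = #A/2 ≥ 3` and no such block has `𝔞(A) = 2`,
then the sum over all words on `B` measurable w.r.t. `π₁|_B` of `Π_A |C({Z_{j_α}}_{α∈A})|`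
is `O(n^{Σ_A (𝔞(A)−2)·1[𝔞(A)≥2]})`. -/
theorem spearman_block_sum_bound_special (k : ℕ) (hk : 0 < k)
    (π π₁ : Finset (Finset (Fin (2 * k))))
    (hπ : IsSetPartition π) (heven : ∀ A ∈ π, Even A.card)
    (hπ₁ : IsPerfectMatching π₁)
    (B : Finset (Fin (2 * k))) (hB : IsJoinBlock π π₁ B)
    (hone : (π.filter fun A => A ⊆ B ∧ 3 ≤ A.card / 2).card = 1)
    (hno2 : (π.filter fun A => A ⊆ B ∧ A.card / 2 = 2).card = 0) :
    ∃ C : ℝ, ∀ n : ℕ,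
      (∑ j ∈ Finset.univ.filter
          (fun j : {x // x ∈ B} → Fin n =>
            ∀ a b : {x // x ∈ B}, (∃ A ∈ π₁, a.1 ∈ A ∧ b.1 ∈ A) → j a = j b),
        ∏ A ∈ (π.filter fun A => A ⊆ B).attach,
          |jointCumulant (permMeasure n)
            (fun a : {x // x ∈ A.1} =>
              Zr n (j ⟨a.1, (Finset.mem_filter.mp A.2).2 a.2⟩))|) ≤
      C * (n : ℝ) ^
        (∑ A ∈ π.filter (fun A => A ⊆ B),
          (if 2 ≤ A.card / 2 then A.card / 2 - 2 else 0)) :=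
  spearman_block_sum_bound_special_general k π π₁ hπ B hB hone

end
end

section
/- Let k be a positive integer, let Π be a partition of {1,…,2k} all of whose blocks have cardinality at least 2, and let Π_0, Π_1 be perfect matchings of {1,…,2k}. Suppose #(Π ∨ Π_0 ∨ Π_1) = 1 and #(Π_0 ∨ Π_1) = r for some positive integer r ≤ k. Then #(Π_0 ∨ Π) + #(Π_1 ∨ Π) ≤ (#Π + 1)·1[r = 1] + min{#Π + 1, k + 1 − r/2}·1[r ≥ 2]. -/
open Finset

noncomputable section

attribute [local instance] Classical.propDecidable

/-!
Work over `𝔽₂` with the space `W σ` of functions that are constant on the blocks of a partition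
`σ`: it has dimension `#σ`, and `W (σ ∨ τ) = W σ ⊓ W τ`. For `X = W (Π₀ ∨ Π)` and
`Y = W (Π₁ ∨ Π)` the intersection `X ⊓ Y = W (Π ∨ Π₀ ∨ Π₁)` is a line, so
`#(Π₀ ∨ Π) + #(Π₁ ∨ Π) = dim (X ⊔ Y) + 1`, and `X ⊔ Y ≤ W Π` gives the bound `#Π + 1`.

Summing a function over each block `C` of `Π₀ ∨ Π₁` kills `W Π₀` and `W Π₁` (such a block is a
union of pairs, and `f u + f u = 0`), hence `X ⊔ Y`; so `dim (X ⊔ Y) ≤ #Π - d`, where `d` is the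
rank of the parity vectors `C ↦ #(A ∩ C) mod 2` of the blocks `A` of `Π`. It remains to see that
`r ≤ 2d + ∑ A, (#A - 2) = 2d + 2k - 2#Π`. The blocks `C` met oddly by some `A` are covered by the
supports of `d` independent parity vectors. Every other `C` is cut (met but not contained) by some
`A`, since `Π ∨ Π₀ ∨ Π₁` is connected and `r ≥ 2`; charge `C` to such an `A`, which meets it in an
even, hence at least two, number of points. Then a block `A` is charged at most `#A - 2` times, and
if its parity vector is one of the `d` basis vectors, its odd blocks and charges together number at
most `#A`.
-/

open Module Submodule

variable {ι : Type*}

def blockRel (P : Finset (Finset ι)) (a b : ι) : Prop :=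
  ∃ A ∈ P, a ∈ A ∧ b ∈ A

lemma blockRel.symm {P : Finset (Finset ι)} {a b : ι} (h : blockRel P a b) : blockRel P b a :=
  let ⟨A, hA, haA, hbA⟩ := h; ⟨A, hA, hbA, haA⟩

lemma eq_of_eqvGen {β : Type*} {r : ι → ι → Prop} {g : ι → β}
    (h : ∀ a b, r a b → g a = g b) {a b : ι} (hab : Relation.EqvGen r a b) : g a = g b := by
  induction hab with
  | rel x y hxy => exact h x y hxy
  | refl => rfl
  | symm _ _ _ ih => exact ih.symm
  | trans _ _ _ _ _ ih₁ ih₂ => exact ih₁.trans ih₂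

def joinSetoid (P Q : Finset (Finset ι)) : Setoid ι :=
  Relation.EqvGen.setoid fun a b => blockRel P a b ∨ blockRel Q a b

namespace IsSetPartition

variable [Fintype ι] {P : Finset (Finset ι)} {A B C : Finset ι} {a b : ι}

def toFinpartition [DecidableEq ι] (hP : IsSetPartition P) : Finpartition (univ : Finset ι) :=
  .ofExistsUnique P (fun _ _ => subset_univ _) (fun a _ => hP.2 a) fun h => by
    simpa using hP.1 ∅ h

lemma eq_of_mem (hP : IsSetPartition P) (hA : A ∈ P) (hB : B ∈ P) (haA : a ∈ A) (haB : a ∈ B) :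
    A = B :=
  hP.toFinpartition.eq_of_mem_parts hA hB haA haB

lemma mem_of_blockRel (hP : IsSetPartition P) (hC : C ∈ P) (hab : blockRel P a b) (ha : a ∈ C) :
    b ∈ C := by
  obtain ⟨A, hA, haA, hbA⟩ := hab
  rwa [hP.eq_of_mem hC hA ha haA]

lemma ne_univ (hP : IsSetPartition P) (hcard : 1 < #P) (hC : C ∈ P) : C ≠ univ := by
  rintro rfl
  obtain ⟨A, hA, hAC⟩ := exists_mem_ne hcard univ
  obtain ⟨x, hx⟩ := hP.1 A hA
  exact hAC (hP.eq_of_mem hA hC hx (mem_univ x))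

lemma blockRel_of_card_eq_one (hP : IsSetPartition P) (hcard : #P = 1) (a b : ι) :
    blockRel P a b := by
  obtain ⟨A, rfl⟩ := card_eq_one.1 hcard
  have hmem (x : ι) : x ∈ A := by
    obtain ⟨B, ⟨hB, hx⟩, -⟩ := hP.2 x
    rwa [mem_singleton.1 hB] at hx
  exact ⟨A, mem_singleton_self A, hmem a, hmem b⟩

lemma sum_inter {M : Type*} [AddCommMonoid M] [DecidableEq ι] (hP : IsSetPartition P)
    (C : Finset ι) (f : ι → M) : ∑ A ∈ P, ∑ x ∈ A ∩ C, f x = ∑ x ∈ C, f x := by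
  let R := hP.toFinpartition.restrict (subset_univ C)
  calc ∑ A ∈ P, ∑ x ∈ A ∩ C, f x = ∑ p ∈ R.parts, ∑ x ∈ p, f x :=
        (hP.toFinpartition.sum_restrict _ (fun p => ∑ x ∈ p, f x) sum_empty).symm
    _ = ∑ x ∈ R.parts.biUnion id, f x := (sum_biUnion R.supIndep.pairwiseDisjoint).symm
    _ = ∑ x ∈ C, f x := by rw [R.biUnion_parts]

lemma sum_card_inter [DecidableEq ι] (hP : IsSetPartition P) (C : Finset ι) :
    ∑ A ∈ P, #(C ∩ A) = #C := by
  simpa only [card_eq_sum_ones, inter_comm] using hP.sum_inter C fun _ => 1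

lemma sum_card (hP : IsSetPartition P) : ∑ A ∈ P, #A = Fintype.card ι := by
  classical
  exact hP.toFinpartition.sum_card_parts

end IsSetPartition

lemma Finpartition.isSetPartition [Fintype ι] (Q : Finpartition (univ : Finset ι)) :
    IsSetPartition Q.parts :=
  ⟨fun _ => Q.nonempty_of_mem_parts, fun a => Q.existsUnique_mem (mem_univ a)⟩

section Join

variable [Fintype ι] (P Q : Finset (Finset ι))

lemma joinBlocks_eq_parts_ofSetoid :
    joinBlocks P Q = (Finpartition.ofSetoid (joinSetoid P Q)).parts := by
  ext B
  rw [joinBlocks, mem_filter, Finpartition.ofSetoid, Finpartition.ofSetSetoid_parts, mem_image]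
  simp only [IsJoinBlock, mem_univ, true_and, eq_comm]
  rfl

lemma isSetPartition_joinBlocks : IsSetPartition (joinBlocks P Q) := by
  rw [joinBlocks_eq_parts_ofSetoid]
  exact Finpartition.isSetPartition _

lemma blockRel_joinBlocks : blockRel (joinBlocks P Q) = joinRel P Q := by
  ext a b
  rw [joinBlocks_eq_parts_ofSetoid, blockRel, ← Finpartition.mem_part_iff_exists,
    Finpartition.mem_part_ofSetoid_iff_rel]
  exact ⟨(joinSetoid P Q).symm', (joinSetoid P Q).symm'⟩

variable {P Q} in
lemma mem_of_joinRel_of_mem_joinBlocks {C : Finset ι} (hC : C ∈ joinBlocks P Q) {a b : ι}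
    (hab : joinRel P Q a b) (ha : a ∈ C) : b ∈ C :=
  (isSetPartition_joinBlocks P Q).mem_of_blockRel hC (blockRel_joinBlocks P Q ▸ hab) ha

end Join

section Invariants

variable (K : Type*) [Semiring K]

def relInvariants (r : ι → ι → Prop) : Submodule K (ι → K) where
  carrier := {f | ∀ a b, r a b → f a = f b}
  add_mem' hf hg a b h := by simp only [Pi.add_apply, hf a b h, hg a b h]
  zero_mem' _ _ _ := rfl
  smul_mem' c f hf a b h := by simp only [Pi.smul_apply, hf a b h]

variable {K}

lemma relInvariants_joinRel (P Q : Finset (Finset ι)) :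
    relInvariants K (joinRel P Q) =
      relInvariants K (blockRel P) ⊓ relInvariants K (blockRel Q) := by
  ext f
  rw [Submodule.mem_inf]
  exact ⟨fun hf => ⟨fun a b h => hf a b (.rel a b (.inl h)),
      fun a b h => hf a b (.rel a b (.inr h))⟩,
    fun ⟨hP, hQ⟩ a b => eq_of_eqvGen fun x y h => h.elim (hP x y) (hQ x y)⟩

variable [Fintype ι] {P : Finset (Finset ι)}

lemma indicator_mem_relInvariants (hP : IsSetPartition P) {A : Finset ι} (hA : A ∈ P) :
    (A : Set ι).indicator 1 ∈ relInvariants K (blockRel P) := by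
  intro a b hab
  have : a ∈ A ↔ b ∈ A := ⟨hP.mem_of_blockRel hA hab, hP.mem_of_blockRel hA hab.symm⟩
  simp only [Set.indicator_apply, mem_coe, this, Pi.one_apply]

lemma relInvariants_blockRel_eq_span (hP : IsSetPartition P) :
    relInvariants K (blockRel P) =
      span K ((fun A : Finset ι => (A : Set ι).indicator 1) '' P) := by
  refine le_antisymm (fun f hf => ?_) (span_le.2 ?_)
  · have hf_eq : f = ∑ A ∈ P, (A : Set ι).indicator f := by
      ext x
      obtain ⟨A, ⟨hA, hxA⟩, hAuniq⟩ := hP.2 x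
      rw [Finset.sum_apply, sum_eq_single A]
      · simp [hxA]
      · intro B hB hBA
        have : x ∉ B := fun hxB => hBA (hAuniq B ⟨hB, hxB⟩)
        simp [this]
      · exact fun h => (h hA).elim
    rw [hf_eq]
    refine sum_mem fun A hA => ?_
    obtain ⟨a, ha⟩ := hP.1 A hA
    have : (A : Set ι).indicator f = f a • (A : Set ι).indicator 1 := by
      ext x
      by_cases hx : x ∈ A
      · simp [hx, hf x a ⟨A, hA, hx, ha⟩]
      · simp [hx]
    rw [this]
    exact smul_mem _ _ (subset_span ⟨A, hA, rfl⟩)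
  · rintro _ ⟨A, hA, rfl⟩
    exact indicator_mem_relInvariants hP hA

end Invariants

section Dimension

variable {K : Type*} [Field K] [Fintype ι] {P : Finset (Finset ι)}

lemma linearIndependent_indicator (hP : IsSetPartition P) :
    LinearIndependent K fun A : P => ((A : Finset ι) : Set ι).indicator (1 : ι → K) := by
  rw [Fintype.linearIndependent_iff]
  intro c hc A
  obtain ⟨x, hx⟩ := hP.1 A A.2
  have := congrFun hc x
  rw [Finset.sum_apply, sum_eq_single A] at this
  · simpa [hx] using this
  · intro B _ hBA
    have : x ∉ (B : Finset ι) := fun hxB => hBA (Subtype.ext (hP.eq_of_mem B.2 A.2 hxB hx))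
    simp [this]
  · exact fun h => (h (mem_univ A)).elim

lemma finrank_relInvariants_blockRel (hP : IsSetPartition P) :
    finrank K (relInvariants K (blockRel P)) = #P := by
  rw [relInvariants_blockRel_eq_span hP, Set.image_eq_range]
  exact (finrank_span_eq_card (linearIndependent_indicator hP)).trans (Fintype.card_coe P)

lemma finrank_relInvariants_joinRel (P Q : Finset (Finset ι)) :
    finrank K (relInvariants K (joinRel P Q)) = joinCard P Q := by
  rw [← blockRel_joinBlocks, finrank_relInvariants_blockRel (isSetPartition_joinBlocks P Q)]
  rfl

end Dimension

lemma exists_apply_ne_zero_of_mem_span {K J : Type*} [Semiring K] {S : Set (J → K)} {v : J → K}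
    (hv : v ∈ span K S) {j : J} (hj : v j ≠ 0) : ∃ w ∈ S, w j ≠ 0 := by
  by_contra! h
  exact hj (span_le (p := LinearMap.ker (LinearMap.proj j)).2 h hv)

section LinearAlgebra

variable {K V : Type*} [DivisionRing K] [AddCommGroup V] [Module K V]

lemma exists_subset_card_eq_finrank_span {α : Type*} (s : Finset α) (v : α → V) :
    ∃ t ⊆ s, #t = finrank K (span K (v '' s)) ∧ v '' s ⊆ span K (v '' t) := by
  obtain ⟨b, hbs, -, hspan, hli⟩ :=
    exists_linearIndepOn_extension (linearIndepOn_empty K v) (Set.empty_subset (s : Set α))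
  obtain ⟨t, rfl⟩ : ∃ t : Finset α, (t : Set α) = b :=
    ⟨(s.finite_toSet.subset hbs).toFinset, Set.Finite.coe_toFinset _⟩
  refine ⟨t, coe_subset.1 hbs, ?_, hspan⟩
  rw [le_antisymm (span_le.2 hspan) (span_mono (Set.image_mono hbs)), Set.image_eq_range]
  exact ((finrank_span_eq_card hli).trans (Fintype.card_coe t)).symm

lemma finrank_add_finrank_map_le {V₂ : Type*} [AddCommGroup V₂] [Module K V₂]
    [FiniteDimensional K V] (f : V →ₗ[K] V₂) {U W : Submodule K V} (hUW : U ≤ W)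
    (hUf : U ≤ LinearMap.ker f) : finrank K U + finrank K (W.map f) ≤ finrank K W := by
  have hrank := (f.domRestrict W).finrank_range_add_finrank_ker
  rw [LinearMap.range_domRestrict, LinearMap.ker_domRestrict] at hrank
  have : finrank K U ≤ finrank K ((LinearMap.ker f).comap W.subtype) := by
    rw [← (Submodule.comapSubtypeEquivOfLe hUW).finrank_eq]
    exact Submodule.finrank_mono (Submodule.comap_mono hUf)
  omega

end LinearAlgebra

section BlockSums

variable (R : Type*) [Semiring R] (Q : Finset (Finset ι))

def blockSum : (ι → R) →ₗ[R] (Q → R) where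
  toFun f C := ∑ x ∈ (C : Finset ι), f x
  map_add' f g := by ext C; simp [sum_add_distrib]
  map_smul' c f := by ext C; simp [mul_sum]

variable {R Q}

lemma blockSum_apply (f : ι → R) (C : Q) : blockSum R Q f C = ∑ x ∈ (C : Finset ι), f x :=
  rfl

lemma blockSum_indicator [DecidableEq ι] (A : Finset ι) :
    blockSum R Q ((A : Set ι).indicator 1) = fun C : Q => (#(A ∩ C) : R) := by
  ext C
  simp [blockSum_apply, Set.indicator_apply, inter_comm]

lemma relInvariants_le_ker_blockSum [Fintype ι] [CharP R 2] {M : Finset (Finset ι)}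
    (hM : IsPerfectMatching M) (hQ : ∀ C ∈ Q, ∀ a b, blockRel M a b → a ∈ C → b ∈ C) :
    relInvariants R (blockRel M) ≤ LinearMap.ker (blockSum R Q) := by
  intro f hf
  ext ⟨C, hC⟩
  rw [blockSum_apply, ← hM.1.sum_inter C f]
  refine sum_eq_zero fun A hA => ?_
  obtain h | ⟨x, hx⟩ := (A ∩ C).eq_empty_or_nonempty
  · rw [h, sum_empty]
  obtain ⟨hxA, hxC⟩ := mem_inter.1 hx
  rw [inter_eq_left.2 fun y hy => hQ C hC x y ⟨A, hA, hxA, hy⟩ hxC]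
  obtain ⟨u, v, huv, rfl⟩ := card_eq_two.1 (hM.2 A hA)
  rw [sum_pair huv, hf u v ⟨_, hA, mem_insert_self u _, mem_insert_of_mem (mem_singleton_self v)⟩,
    CharTwo.add_self_eq_zero]

end BlockSums

section Counting

variable [DecidableEq ι] {Q T : Finset (Finset ι)} {A : Finset ι}

def parityVector (Q : Finset (Finset ι)) (A : Finset ι) : Q → ZMod 2 :=
  fun C => #(A ∩ C)

lemma card_add_two_le_of_forall_cut (hA : 2 ≤ #A)
    (hT : ∀ C ∈ T, Even #(A ∩ C) ∧ (A ∩ C).Nonempty ∧ ¬A ⊆ C) (hTA : 2 * #T ≤ #A) :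
    #T + 2 ≤ #A := by
  obtain rfl | ⟨C, hC⟩ := T.eq_empty_or_nonempty
  · simpa using hA
  obtain ⟨⟨n, hn⟩, hne, hAC⟩ := hT C hC
  have hlt : #(A ∩ C) < #A :=
    card_lt_card (ssubset_of_subset_of_ne inter_subset_left fun h => hAC (h ▸ inter_subset_right))
  have := hne.card_pos
  have := card_pos.2 ⟨C, hC⟩
  omega

variable [Fintype ι]

lemma card_filter_odd_add_two_mul_card_le (hQ : IsSetPartition Q) (hTQ : T ⊆ Q)
    (hT : ∀ C ∈ T, Even #(A ∩ C) ∧ (A ∩ C).Nonempty) :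
    #{C ∈ Q | Odd #(A ∩ C)} + 2 * #T ≤ #A := by
  have hpoint : ∀ C ∈ Q,
      (if Odd #(A ∩ C) then 1 else 0) + (if C ∈ T then 2 else 0) ≤ #(A ∩ C) := by
    intro C _
    by_cases hCT : C ∈ T
    · obtain ⟨⟨n, hn⟩, hne⟩ := hT C hCT
      have : 0 < #(A ∩ C) := hne.card_pos
      simp only [hCT, if_true, Nat.not_odd_iff_even.2 ⟨n, hn⟩, if_false]
      omega
    · by_cases hodd : Odd #(A ∩ C)
      · simp only [hodd, hCT, if_true, if_false]
        exact hodd.pos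
      · simp [hodd, hCT]
  calc #{C ∈ Q | Odd #(A ∩ C)} + 2 * #T
      = ∑ C ∈ Q, ((if Odd #(A ∩ C) then 1 else 0) + (if C ∈ T then 2 else 0)) := by
        rw [sum_add_distrib, sum_boole, sum_ite_mem, inter_eq_right.2 hTQ]
        simp [mul_comm]
    _ ≤ ∑ C ∈ Q, #(A ∩ C) := sum_le_sum hpoint
    _ = #A := hQ.sum_card_inter A

theorem card_add_two_mul_card_le_two_mul_finrank_add (P : Finset (Finset ι))
    (hQ : IsSetPartition Q) (hP : ∀ A ∈ P, 2 ≤ #A)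
    (hcut : ∀ C ∈ Q, ∃ A ∈ P, (A ∩ C).Nonempty ∧ ¬A ⊆ C) :
    #Q + 2 * #P ≤ 2 * finrank (ZMod 2) (span (ZMod 2) (parityVector Q '' P)) + ∑ A ∈ P, #A := by
  obtain ⟨B, hBP, hBcard, hBspan⟩ :=
    exists_subset_card_eq_finrank_span (K := ZMod 2) P (parityVector Q)
  rw [← hBcard]
  choose! cut hcutP hcut_ne hcut_nsub using hcut
  -- `O`: the blocks met oddly by some block of `P`, covered by the supports of the rows in `B`;
  -- `T A`: the other blocks, charged to the block `A = cut C` cutting them.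
  set O := {C ∈ Q | ∃ A ∈ P, Odd #(A ∩ C)}
  set E := {C ∈ Q | ¬∃ A ∈ P, Odd #(A ∩ C)}
  set T : Finset ι → Finset (Finset ι) := fun A => {C ∈ E | cut C = A}
  have hOE : #O + #E = #Q := card_filter_add_card_filter_not _
  have hE : #E = ∑ A ∈ P, #(T A) :=
    card_eq_sum_card_fiberwise fun C hC => hcutP C (mem_filter.1 hC).1
  have hO : #O ≤ ∑ A ∈ B, #{C ∈ Q | Odd #(A ∩ C)} := by
    refine (card_le_card fun C hC => ?_).trans card_biUnion_le
    obtain ⟨hCQ, A, hA, hodd⟩ := mem_filter.1 hC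
    obtain ⟨_, ⟨A', hA', rfl⟩, hA'C⟩ := exists_apply_ne_zero_of_mem_span
      (hBspan ⟨A, hA, rfl⟩) (j := ⟨C, hCQ⟩) (ZMod.natCast_ne_zero_iff_odd.2 hodd)
    exact mem_biUnion.2 ⟨A', hA', mem_filter.2 ⟨hCQ, ZMod.natCast_ne_zero_iff_odd.1 hA'C⟩⟩
  have hT : ∀ A, ∀ C ∈ T A, Even #(A ∩ C) ∧ (A ∩ C).Nonempty ∧ ¬A ⊆ C := by
    intro A C hC
    obtain ⟨hCE, rfl⟩ := mem_filter.1 hC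
    obtain ⟨hCQ, hCeven⟩ := mem_filter.1 hCE
    exact ⟨Nat.not_odd_iff_even.1 fun h => hCeven ⟨_, hcutP C hCQ, h⟩, hcut_ne C hCQ,
      hcut_nsub C hCQ⟩
  have hblock : ∀ A ∈ P, #(T A) + 2 + (if A ∈ B then #{C ∈ Q | Odd #(A ∩ C)} else 0) ≤
      #A + (if A ∈ B then 2 else 0) := by
    intro A hA
    have hTQ : T A ⊆ Q := fun C hC => (mem_filter.1 (mem_filter.1 hC).1).1
    have h₁ := card_filter_odd_add_two_mul_card_le hQ hTQ fun C hC =>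
      ⟨(hT A C hC).1, (hT A C hC).2.1⟩
    have h₂ := card_add_two_le_of_forall_cut (hP A hA) (hT A) (by omega)
    split_ifs <;> omega
  have hsum := sum_le_sum hblock
  simp only [sum_add_distrib, sum_ite_mem, inter_eq_right.2 hBP, sum_const, smul_eq_mul] at hsum
  omega

end Counting

section

variable [Fintype ι] [DecidableEq ι]

lemma exists_cut_of_joinCard_eq_one {P Q R : Finset (Finset ι)}
    (hjoin : joinCard (joinBlocks P Q) R = 1) {C : Finset ι} (hC : C ∈ joinBlocks Q R)
    (hCu : C ≠ univ) : ∃ A ∈ P, (A ∩ C).Nonempty ∧ ¬A ⊆ C := by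
  by_contra! hnocut
  have closed : ∀ S : Finset (Finset ι), (∀ a b, blockRel S a b → a ∈ C → b ∈ C) →
      ∀ a b, blockRel S a b → (a ∈ C) = (b ∈ C) :=
    fun S h a b hab => propext ⟨h a b hab, h b a hab.symm⟩
  have hP : ∀ a b, blockRel P a b → a ∈ C → b ∈ C :=
    fun a b ⟨A, hA, haA, hbA⟩ ha => hnocut A hA ⟨a, mem_inter.2 ⟨haA, ha⟩⟩ hbA
  have hQ : ∀ a b, blockRel Q a b → a ∈ C → b ∈ C :=
    fun a b hab => mem_of_joinRel_of_mem_joinBlocks hC (.rel a b (.inl hab))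
  have hR : ∀ a b, blockRel R a b → a ∈ C → b ∈ C :=
    fun a b hab => mem_of_joinRel_of_mem_joinBlocks hC (.rel a b (.inr hab))
  have hPQ : ∀ a b, blockRel (joinBlocks P Q) a b → (a ∈ C) = (b ∈ C) := fun a b hab =>
    eq_of_eqvGen (fun x y h => h.elim (closed P hP x y) (closed Q hQ x y))
      (blockRel_joinBlocks P Q ▸ hab)
  obtain ⟨c, hc⟩ := (isSetPartition_joinBlocks Q R).1 C hC
  refine hCu (eq_univ_of_forall fun b => ?_)
  have hcb : joinRel (joinBlocks P Q) R c b := blockRel_joinBlocks (joinBlocks P Q) R ▸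
    (isSetPartition_joinBlocks _ _).blockRel_of_card_eq_one hjoin c b
  exact eq_of_eqvGen (fun x y h => h.elim (hPQ x y) (closed R hR x y)) hcb ▸ hc

theorem joinCard_add_joinCard_add_finrank_le {Pπ P₀ P₁ : Finset (Finset ι)}
    (hP : IsSetPartition Pπ) (hP₀ : IsPerfectMatching P₀) (hP₁ : IsPerfectMatching P₁)
    (hjoin : joinCard (joinBlocks Pπ P₀) P₁ = 1) :
    joinCard P₀ Pπ + joinCard P₁ Pπ +
        finrank (ZMod 2) (span (ZMod 2) (parityVector (joinBlocks P₀ P₁) '' Pπ)) ≤ #Pπ + 1 := by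
  set Q := joinBlocks P₀ P₁
  set X := relInvariants (ZMod 2) (joinRel P₀ Pπ)
  set Y := relInvariants (ZMod 2) (joinRel P₁ Pπ)
  have hXY : finrank (ZMod 2) ↥(X ⊓ Y) = 1 := by
    have : X ⊓ Y = relInvariants (ZMod 2) (joinRel (joinBlocks Pπ P₀) P₁) := by
      simp only [X, Y, relInvariants_joinRel, blockRel_joinBlocks]
      ext f
      simp only [Submodule.mem_inf]
      tauto
    rw [this, finrank_relInvariants_joinRel, hjoin]
  have hsupinf := Submodule.finrank_sup_add_finrank_inf_eq X Y
  rw [hXY, finrank_relInvariants_joinRel, finrank_relInvariants_joinRel] at hsupinf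
  have hker : X ⊔ Y ≤ LinearMap.ker (blockSum (ZMod 2) Q) := by
    simp only [X, Y, relInvariants_joinRel]
    exact sup_le
      (inf_le_left.trans <| relInvariants_le_ker_blockSum hP₀ fun C hC a b h =>
        mem_of_joinRel_of_mem_joinBlocks hC (.rel a b (.inl h)))
      (inf_le_left.trans <| relInvariants_le_ker_blockSum hP₁ fun C hC a b h =>
        mem_of_joinRel_of_mem_joinBlocks hC (.rel a b (.inr h)))
  have hle : X ⊔ Y ≤ relInvariants (ZMod 2) (blockRel Pπ) := by
    simp only [X, Y, relInvariants_joinRel]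
    exact sup_le inf_le_right inf_le_right
  have hmap : (relInvariants (ZMod 2) (blockRel Pπ)).map (blockSum (ZMod 2) Q) =
      span (ZMod 2) (parityVector Q '' Pπ) := by
    rw [relInvariants_blockRel_eq_span hP, map_span, ← Set.image_comp]
    congr! 2 with A
    exact blockSum_indicator A
  have hrank := finrank_add_finrank_map_le _ hle hker
  rw [hmap, finrank_relInvariants_blockRel hP] at hrank
  omega

end

theorem anderson_zeitouni_bound_general (k : ℕ)
    (Pπ P₀ P₁ : Finset (Finset (Fin (2 * k))))
    (hP : IsSetPartition Pπ) (hcard : ∀ A ∈ Pπ, 2 ≤ A.card)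
    (hP₀ : IsPerfectMatching P₀) (hP₁ : IsPerfectMatching P₁)
    (r : ℕ) (hr : 1 ≤ r)
    (hjoin1 : joinCard (joinBlocks Pπ P₀) P₁ = 1)
    (hjoinr : joinCard P₀ P₁ = r) :
    ((joinCard P₀ Pπ : ℝ) + (joinCard P₁ Pπ : ℝ)) ≤
      (if r = 1 then (Pπ.card : ℝ) + 1 else 0) +
        (if 2 ≤ r then min ((Pπ.card : ℝ) + 1) ((k : ℝ) + 1 - (r : ℝ) / 2) else 0) := by
  set d := finrank (ZMod 2) (span (ZMod 2) (parityVector (joinBlocks P₀ P₁) '' Pπ))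
  have hdim : joinCard P₀ Pπ + joinCard P₁ Pπ + d ≤ #Pπ + 1 :=
    joinCard_add_joinCard_add_finrank_le hP hP₀ hP₁ hjoin1
  have hcount (hr2 : 2 ≤ r) : r + 2 * #Pπ ≤ 2 * d + 2 * k := by
    have hQ := isSetPartition_joinBlocks P₀ P₁
    have hQcard : 1 < joinCard P₀ P₁ := hjoinr ▸ hr2
    have := card_add_two_mul_card_le_two_mul_finrank_add Pπ hQ hcard fun C hC =>
      exists_cut_of_joinCard_eq_one hjoin1 hC (hQ.ne_univ hQcard hC)
    rwa [hP.sum_card, Fintype.card_fin, ← joinCard, hjoinr] at this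
  obtain rfl | hr2 := hr.eq_or_lt
  · simp only [if_true, Nat.not_ofNat_le_one, if_false, add_zero]
    exact_mod_cast (by omega : joinCard P₀ Pπ + joinCard P₁ Pπ ≤ #Pπ + 1)
  · replace hr2 : 2 ≤ r := hr2
    rw [if_neg (by omega), if_pos hr2, zero_add, le_min_iff]
    constructor
    · exact_mod_cast (by omega : joinCard P₀ Pπ + joinCard P₁ Pπ ≤ #Pπ + 1)
    · have hdim' : (joinCard P₀ Pπ : ℝ) + joinCard P₁ Pπ + d ≤ #Pπ + 1 := by exact_mod_cast hdim
      have hcount' : (r : ℝ) + 2 * #Pπ ≤ 2 * d + 2 * k := by exact_mod_cast hcount hr2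
      linarith

/-- Proposition 3.1 of Anderson–Zeitouni (improved form): if `Π` is a partition of
`{1,…,2k}` with blocks of size at least `2`, `P₀, P₁` are perfect matchings,
`#(Π ∨ P₀ ∨ P₁) = 1` and `#(P₀ ∨ P₁) = r ≤ k`, then
`#(P₀ ∨ Π) + #(P₁ ∨ Π) ≤ (#Π + 1)·1[r=1] + min{#Π + 1, k + 1 − r/2}·1[r≥2]`. -/
theorem anderson_zeitouni_bound (k : ℕ) (hk : 0 < k)
    (Pπ P₀ P₁ : Finset (Finset (Fin (2 * k))))
    (hP : IsSetPartition Pπ) (hcard : ∀ A ∈ Pπ, 2 ≤ A.card)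
    (hP₀ : IsPerfectMatching P₀) (hP₁ : IsPerfectMatching P₁)
    (r : ℕ) (hr : 1 ≤ r) (hrk : r ≤ k)
    (hjoin1 : joinCard (joinBlocks Pπ P₀) P₁ = 1)
    (hjoinr : joinCard P₀ P₁ = r) :
    ((joinCard P₀ Pπ : ℝ) + (joinCard P₁ Pπ : ℝ)) ≤
      (if r = 1 then (Pπ.card : ℝ) + 1 else 0) +
        (if 2 ≤ r then min ((Pπ.card : ℝ) + 1) ((k : ℝ) + 1 - (r : ℝ) / 2) else 0) :=
  anderson_zeitouni_bound_general k Pπ P₀ P₁ hP hcard hP₀ hP₁ r hr hjoin1 hjoinr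
end
end

section
/- Let c ∈ (0,∞), and for each n let T = T_n be the n×n real symmetric matrix with diagonal entries 1 and off-diagonal entries −1/(n−1). For z in the upper half-plane ℂ⁺, let m(z) ∈ ℂ⁺ satisfy m(z) = [(1 − c − c·z·m(z)) − z]^{−1} and set m̲(z) = −(1−c)/z + c·m(z). Then for any fixed z, z_1, z_2 ∈ ℂ⁺, as n → ∞: (a) (1/n) Σ_{i=1}^{n} e_i^T T^{1/2} (m̲(z_1) T + I)^{−1} T^{1/2} e_i · e_i^T T^{1/2} (m̲(z_2) T + I)^{−1} T^{1/2} e_i → (m̲(z_1)+1)^{−1} (m̲(z_2)+1)^{−1}; and (b) (1/n) Σ_{i=1}^{n} e_i^T T^{1/2} (m̲(z) T + I)^{−1} T^{1/2} e_i · e_i^T T^{1/2} (m̲(z) T + I)^{−2} T^{1/2} e_i → (m̲(z)+1)^{−3}; here e_i is the n×1 vector with a 1 in the i-th coordinate and 0 elsewhere, and T^{1/2} is the positive semidefinite square root of T. -/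
/-!
Since `T = α • (1 - J / n)` with `α = n / (n - 1)` and `J` the all-ones matrix, `T ^ 2 = α • T`.
Hence `(u • T + 1)⁻¹ = 1 - (u / (u α + 1)) • T`, and for any square root `S` of `T`,
`S (u • T + 1)⁻¹ S = (u α + 1)⁻¹ • T`, whose diagonal is constantly `(u α + 1)⁻¹`;
the same applies to `(u • T + 1) ^ 2 = u' • T + 1`, where `u' α + 1 = (u α + 1) ^ 2`.
As `α → 1`, the limits follow once `u α + 1 ≠ 0`, which holds because `m̲(z)` is not real:
the fixed-point equation gives `(m̲ + 1) z m = -1` and `z m̲ = -(1 - c) + c z m`,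
which force a real `m̲` to be `0` and then `1 = 0`.
-/

open Matrix Filter
open scoped ComplexOrder

noncomputable section

/-- The population covariance matrix `T = E[ZᵀZ]` (as a complex matrix): diagonal entries
`1` and off-diagonal entries `−1/(n−1)`. -/
def Tmat (n : ℕ) : Matrix (Fin n) (Fin n) ℂ :=
  Matrix.of fun i j => if i = j then 1 else -(1 / ((n : ℂ) - 1))

/-- The companion Stieltjes transform `m̲(z) = −(1−c)/z + c·m(z)`. -/
def mUnder (c : ℝ) (m : ℂ → ℂ) (z : ℂ) : ℂ :=
  -(1 - (c : ℂ)) / z + (c : ℂ) * m z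

open Topology

namespace Matrix

variable {ι K : Type*} [Fintype ι] [DecidableEq ι] [Field K]

theorem sq_smul_one_add_smul_of_const {a b : K} (h : a + b * Fintype.card ι = 0) :
    (a • 1 + b • of fun _ _ : ι => (1 : K)) ^ 2 = a • (a • 1 + b • of fun _ _ : ι => (1 : K)) := by
  have hJ : (of fun _ _ : ι => (1 : K)) * of (fun _ _ => 1) =
      (Fintype.card ι : K) • of fun _ _ => 1 := by
    ext i j
    simp [mul_apply]
  rw [sq, add_mul, mul_add, mul_add, smul_mul_smul, smul_mul_smul, smul_mul_smul, smul_mul_smul,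
    one_mul, one_mul, mul_one, hJ]
  linear_combination (norm := module) b • h • of fun _ _ : ι => (1 : K)

variable {T S : Matrix ι ι K} {α u : K}

theorem smul_add_one_sq (hT : T ^ 2 = α • T) :
    (u • T + 1) ^ 2 = (2 * u + u ^ 2 * α) • T + 1 := by
  rw [sq] at hT ⊢
  simp only [add_mul, mul_add, smul_mul_smul, hT, mul_one, one_mul]
  module

theorem inv_smul_add_one (hT : T ^ 2 = α • T) (hu : u * α + 1 ≠ 0) :
    (u • T + 1)⁻¹ = 1 - (u / (u * α + 1)) • T := by
  refine inv_eq_right_inv ?_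
  rw [sq] at hT
  simp only [add_mul, mul_sub, smul_mul_smul, hT, mul_one, one_mul]
  linear_combination (norm := module) (div_mul_cancel₀ u hu).symm • T

theorem conj_inv_smul_add_one (hS : S ^ 2 = T) (hT : T ^ 2 = α • T) (hu : u * α + 1 ≠ 0) :
    S * (u • T + 1)⁻¹ * S = (u * α + 1)⁻¹ • T := by
  have hSTS : S * T * S = α • T := by rw [← hT, ← hS]; noncomm_ring
  have hcoef : 1 - u / (u * α + 1) * α = (u * α + 1)⁻¹ := by field_simp; ring
  rw [sq] at hS
  simp only [inv_smul_add_one hT hu, mul_sub, sub_mul, mul_one, mul_smul_comm, smul_mul_assoc,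
    hSTS, hS]
  linear_combination (norm := module) hcoef • T

end Matrix

def TmatEigenvalue (n : ℕ) : ℂ := n / (n - 1)

theorem Tmat_eq_smul_one_add_smul_of_const {n : ℕ} (hn : n ≠ 1) :
    Tmat n = TmatEigenvalue n • 1 + (-(1 / ((n : ℂ) - 1))) • of fun _ _ => 1 := by
  have hn' : (n : ℂ) - 1 ≠ 0 := sub_ne_zero.mpr (mod_cast hn)
  ext i j
  by_cases hij : i = j
  · simp [Tmat, TmatEigenvalue, hij]
    field_simp
    ring
  · simp [Tmat, hij]

theorem Tmat_sq {n : ℕ} (hn : n ≠ 1) : Tmat n ^ 2 = TmatEigenvalue n • Tmat n := by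
  rw [Tmat_eq_smul_one_add_smul_of_const hn]
  refine sq_smul_one_add_smul_of_const ?_
  simp only [Fintype.card_fin, TmatEigenvalue]
  ring

theorem Tmat_apply_self {n : ℕ} (i : Fin n) : Tmat n i i = 1 := by
  simp [Tmat]

theorem TmatEigenvalue_eq_ofReal (n : ℕ) : TmatEigenvalue n = ((n / (n - 1) : ℝ) : ℂ) := by
  push_cast
  rfl

theorem tendsto_TmatEigenvalue : Tendsto TmatEigenvalue atTop (𝓝 1) := by
  show Tendsto (fun n : ℕ => (n : ℂ) / (n - 1)) atTop (𝓝 1)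
  simpa only [← sub_eq_add_neg] using tendsto_natCast_div_add_atTop (-1 : ℂ)

theorem mul_ofReal_add_one_ne_zero {u : ℂ} (hu : u.im ≠ 0) (a : ℝ) : u * a + 1 ≠ 0 := by
  intro h
  have him := congrArg Complex.im h
  have hre := congrArg Complex.re h
  simp only [Complex.add_im, Complex.mul_im, Complex.ofReal_re, Complex.ofReal_im,
    Complex.one_im, Complex.add_re, Complex.mul_re, Complex.one_re] at him hre
  have ha : a = 0 := by simpa [hu] using him
  simp [ha] at hre

theorem mul_TmatEigenvalue_add_one_ne_zero {u : ℂ} (hu : u.im ≠ 0) (n : ℕ) :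
    u * TmatEigenvalue n + 1 ≠ 0 := by
  rw [TmatEigenvalue_eq_ofReal]
  exact mul_ofReal_add_one_ne_zero hu _

theorem tendsto_inv_mul_TmatEigenvalue_add_one {u : ℂ} (hu : u.im ≠ 0) :
    Tendsto (fun n => (u * TmatEigenvalue n + 1)⁻¹) atTop (𝓝 (u + 1)⁻¹) := by
  have h := ((tendsto_TmatEigenvalue.const_mul u).add_const 1).inv₀
    (by simpa using mul_ofReal_add_one_ne_zero hu 1)
  simpa only [mul_one] using h

theorem conj_inv_smul_Tmat_add_one_apply_self {n : ℕ} (hn : n ≠ 1) {S : Matrix (Fin n) (Fin n) ℂ}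
    (hS : S ^ 2 = Tmat n) {u : ℂ} (hu : u.im ≠ 0) (i : Fin n) :
    (S * (u • Tmat n + 1)⁻¹ * S) i i = (u * TmatEigenvalue n + 1)⁻¹ := by
  rw [conj_inv_smul_add_one hS (Tmat_sq hn) (mul_TmatEigenvalue_add_one_ne_zero hu n)]
  simp [Tmat_apply_self]

theorem conj_inv_sq_smul_Tmat_add_one_apply_self {n : ℕ} (hn : n ≠ 1)
    {S : Matrix (Fin n) (Fin n) ℂ} (hS : S ^ 2 = Tmat n) {u : ℂ} (hu : u.im ≠ 0) (i : Fin n) :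
    (S * (((u • Tmat n + 1) : Matrix (Fin n) (Fin n) ℂ) ^ 2)⁻¹ * S) i i =
      ((u * TmatEigenvalue n + 1)⁻¹) ^ 2 := by
  have hsq : ∀ α : ℂ, (2 * u + u ^ 2 * α) * α + 1 = (u * α + 1) ^ 2 := fun α => by ring
  have hne := hsq _ ▸ pow_ne_zero 2 (mul_TmatEigenvalue_add_one_ne_zero hu n)
  rw [smul_add_one_sq (Tmat_sq hn), conj_inv_smul_add_one hS (Tmat_sq hn) hne]
  simp [Tmat_apply_self, hsq]

theorem tendsto_mean_of_eventually_forall_eq {g : (n : ℕ) → Fin n → ℂ} {h : ℕ → ℂ} {L : ℂ}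
    (hg : ∀ᶠ n in atTop, ∀ i, g n i = h n) (hh : Tendsto h atTop (𝓝 L)) :
    Tendsto (fun n : ℕ => (1 / (n : ℂ)) * ∑ i, g n i) atTop (𝓝 L) := by
  refine hh.congr' ?_
  filter_upwards [hg, eventually_ne_atTop 0] with n hgn hn
  simp [hgn, hn]

theorem mUnder_im_ne_zero {c : ℝ} {m : ℂ → ℂ} {z : ℂ} (hz : 0 < z.im) (hm : 0 < (m z).im)
    (hfix : m z = ((1 - (c : ℂ) - (c : ℂ) * z * m z) - z)⁻¹) : (mUnder c m z).im ≠ 0 := by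
  have hz0 : z ≠ 0 := fun h => by simp [h] at hz
  have hD : (1 - (c : ℂ) - c * z * m z) - z ≠ 0 := fun hD => by
    rw [hfix, hD] at hm
    simp at hm
  have hmD : m z * ((1 - (c : ℂ) - c * z * m z) - z) = 1 := by
    nth_rewrite 1 [hfix]
    exact inv_mul_cancel₀ hD
  set u := mUnder c m z
  set w := z * m z
  have hzu : z * u = -(1 - c) + c * w := by
    simp only [u, w, mUnder]
    field_simp
  have hw : (u + 1) * w = -1 := by linear_combination m z * hzu - hmD
  intro hu
  have h1 := congrArg Complex.re hw
  have h2 := congrArg Complex.im hw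
  have h3 := congrArg Complex.re hzu
  have h4 := congrArg Complex.im hzu
  simp only [Complex.mul_re, Complex.mul_im, Complex.add_re, Complex.add_im, Complex.neg_re,
    Complex.neg_im, Complex.sub_re, Complex.sub_im, Complex.ofReal_re, Complex.ofReal_im,
    Complex.one_re, Complex.one_im, hu] at h1 h2 h3 h4
  have hwim : w.im = 0 := by linear_combination w.im * h1 - w.re * h2
  have hr : u.re = 0 := by
    have : z.im * u.re = 0 := by linear_combination h4 + c * hwim
    exact (mul_eq_zero.mp this).resolve_left hz.ne'
  have : (1 : ℝ) = 0 := by linear_combination c * h1 + h3 - (c * w.re + z.re) * hr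
  exact one_ne_zero this

theorem spearman_population_resolvent_limits_general (c : ℝ)
    (m : ℂ → ℂ)
    (hm : ∀ z : ℂ, 0 < z.im → 0 < (m z).im)
    (hfix : ∀ z : ℂ, 0 < z.im → m z = ((1 - (c : ℂ) - (c : ℂ) * z * m z) - z)⁻¹)
    (R : (n : ℕ) → Matrix (Fin n) (Fin n) ℂ)
    (hRsq : ∀ n, (R n) ^ 2 = Tmat n) :
    ∀ z z₁ z₂ : ℂ, 0 < z.im → 0 < z₁.im → 0 < z₂.im →
      (Tendsto
        (fun n : ℕ => (1 / (n : ℂ)) * ∑ i : Fin n,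
          (R n * (mUnder c m z₁ • Tmat n + 1)⁻¹ * R n) i i *
            (R n * (mUnder c m z₂ • Tmat n + 1)⁻¹ * R n) i i)
        atTop (nhds ((mUnder c m z₁ + 1)⁻¹ * (mUnder c m z₂ + 1)⁻¹))) ∧
      (Tendsto
        (fun n : ℕ => (1 / (n : ℂ)) * ∑ i : Fin n,
          (R n * (mUnder c m z • Tmat n + 1)⁻¹ * R n) i i *
            (R n * ((((mUnder c m z • Tmat n + 1) : Matrix (Fin n) (Fin n) ℂ) ^ 2)⁻¹) * R n) i i)
        atTop (nhds (((mUnder c m z + 1) ^ 3)⁻¹))) := by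
  intro z z₁ z₂ hz hz₁ hz₂
  have him : ∀ w : ℂ, 0 < w.im → (mUnder c m w).im ≠ 0 := fun w hw =>
    mUnder_im_ne_zero hw (hm w hw) (hfix w hw)
  constructor
  · refine tendsto_mean_of_eventually_forall_eq ?_
      ((tendsto_inv_mul_TmatEigenvalue_add_one (him z₁ hz₁)).mul
        (tendsto_inv_mul_TmatEigenvalue_add_one (him z₂ hz₂)))
    filter_upwards [eventually_ne_atTop 1] with n hn i
    rw [conj_inv_smul_Tmat_add_one_apply_self hn (hRsq n) (him z₁ hz₁),
      conj_inv_smul_Tmat_add_one_apply_self hn (hRsq n) (him z₂ hz₂)]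
  · have hlim := tendsto_inv_mul_TmatEigenvalue_add_one (him z hz)
    rw [show ((mUnder c m z + 1) ^ 3)⁻¹ = (mUnder c m z + 1)⁻¹ * ((mUnder c m z + 1)⁻¹) ^ 2 by
      rw [inv_pow, ← mul_inv, ← pow_succ']]
    refine tendsto_mean_of_eventually_forall_eq ?_ (hlim.mul (hlim.pow 2))
    filter_upwards [eventually_ne_atTop 1] with n hn i
    rw [conj_inv_smul_Tmat_add_one_apply_self hn (hRsq n) (him z hz),
      conj_inv_sq_smul_Tmat_add_one_apply_self hn (hRsq n) (him z hz)]

/-- Lemma 6.1: with `T = T_n` as above, `m(z)` the solution in `ℂ⁺` of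
`m(z) = [(1−c−c·z·m(z))−z]⁻¹`, `m̲(z) = −(1−c)/z + c·m(z)`, and `T^{1/2}` the positive
semidefinite square root of `T`, the two normalized diagonal sums converge to
`(m̲(z₁)+1)⁻¹(m̲(z₂)+1)⁻¹` and `(m̲(z)+1)⁻³`, respectively. -/
theorem spearman_population_resolvent_limits (c : ℝ) (hc : 0 < c)
    (m : ℂ → ℂ)
    (hm : ∀ z : ℂ, 0 < z.im → 0 < (m z).im)
    (hfix : ∀ z : ℂ, 0 < z.im → m z = ((1 - (c : ℂ) - (c : ℂ) * z * m z) - z)⁻¹)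
    (R : (n : ℕ) → Matrix (Fin n) (Fin n) ℂ)
    (hRpsd : ∀ n, (R n).PosSemidef) (hRsq : ∀ n, (R n) ^ 2 = Tmat n) :
    ∀ z z₁ z₂ : ℂ, 0 < z.im → 0 < z₁.im → 0 < z₂.im →
      (Tendsto
        (fun n : ℕ => (1 / (n : ℂ)) * ∑ i : Fin n,
          (R n * (mUnder c m z₁ • Tmat n + 1)⁻¹ * R n) i i *
            (R n * (mUnder c m z₂ • Tmat n + 1)⁻¹ * R n) i i)
        atTop (nhds ((mUnder c m z₁ + 1)⁻¹ * (mUnder c m z₂ + 1)⁻¹))) ∧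
      (Tendsto
        (fun n : ℕ => (1 / (n : ℂ)) * ∑ i : Fin n,
          (R n * (mUnder c m z • Tmat n + 1)⁻¹ * R n) i i *
            (R n * ((((mUnder c m z • Tmat n + 1) : Matrix (Fin n) (Fin n) ℂ) ^ 2)⁻¹) * R n) i i)
        atTop (nhds (((mUnder c m z + 1) ^ 3)⁻¹))) :=
  spearman_population_resolvent_limits_general c m hm hfix R hRsq
end
end
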